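/- arXiv:2107.06714 — 9 statements merged into one kernel-verified Lean document; each statement's English description precedes it below -/
import Mathlib

section
/- Let z̃₁, …, z̃ₙ be independent real-valued random variables such that each z̃ᵢ has support contained in [−1,1], mean E[z̃ᵢ] = 0, and variance E[z̃ᵢ²] = θ for some θ > 0. Then for every c with 0 < c < θ·√n, the probability that ∑_{i=1}^n |z̃ᵢ| ≤ c·√n is at most exp(−(θ·√n − c)²/(2θ)). -/
/-!
Put `X i = |Z i|`. Since `z² ≤ |z|` on `[-1, 1]`, each `X i` has mean at least `θ` and second
moment `θ`, so the bound `exp (-x) ≤ 1 - x + x² / 2` for `x ≥ 0` gives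
`E[exp (-t X i)] ≤ exp (t² θ / 2 - t θ)` for `t ≥ 0`. Independence and the Chernoff bound then give
`P(∑ X i ≤ c √n) ≤ exp (t c √n + n (t² θ / 2 - t θ))`, and `t = (θ √n - c) / (θ √n)` minimises
the exponent to `-(θ √n - c)² / (2 θ)`.
-/

open MeasureTheory ProbabilityTheory Real

theorem Real.exp_neg_le_one_sub_add_sq_div_two {x : ℝ} (hx : 0 ≤ x) :
    exp (-x) ≤ 1 - x + x ^ 2 / 2 := by
  let f : ℝ → ℝ := fun t => 1 - t + t ^ 2 / 2 - exp (-t)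
  have hf : ∀ t, HasDerivAt f (t - 1 + exp (-t)) t := fun t =>
    ((((hasDerivAt_id' t).const_sub 1).add ((hasDerivAt_pow 2 t).div_const 2)).sub
      (hasDerivAt_neg t).exp).congr_deriv (by norm_num; ring)
  have hmono : Monotone f := monotone_of_deriv_nonneg (fun t => (hf t).differentiableAt)
    fun t => by rw [(hf t).deriv]; linarith [add_one_le_exp (-t)]
  simpa [f] using hmono hx

namespace ProbabilityTheory

variable {Ω : Type*} [MeasurableSpace Ω] {μ : Measure Ω}

theorem integral_sq_le_integral_abs {X : Ω → ℝ} (hX : Integrable X μ)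
    (hX1 : ∀ᵐ ω ∂μ, |X ω| ≤ 1) : ∫ ω, X ω ^ 2 ∂μ ≤ ∫ ω, |X ω| ∂μ := by
  refine integral_mono_of_nonneg (ae_of_all _ fun ω => sq_nonneg _) hX.abs ?_
  filter_upwards [hX1] with ω hω
  rw [← sq_abs]
  nlinarith [abs_nonneg (X ω)]

variable [IsProbabilityMeasure μ]

theorem mgf_neg_le_exp_of_nonneg {X : Ω → ℝ} (hX0 : 0 ≤ᵐ[μ] X) (hX : Integrable X μ)
    (hX2 : Integrable (fun ω => X ω ^ 2) μ) {t : ℝ} (ht : 0 ≤ t) :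
    mgf X μ (-t) ≤ exp (t ^ 2 * (∫ ω, X ω ^ 2 ∂μ) / 2 - t * ∫ ω, X ω ∂μ) := by
  have hlin : Integrable (fun ω => 1 - t * X ω) μ := (integrable_const 1).sub (hX.const_mul t)
  have hquad : Integrable (fun ω => 1 - t * X ω + t ^ 2 * X ω ^ 2 / 2) μ :=
    hlin.add ((hX2.const_mul _).div_const 2)
  calc mgf X μ (-t) ≤ ∫ ω, (1 - t * X ω + t ^ 2 * X ω ^ 2 / 2) ∂μ := by
        refine integral_mono_of_nonneg (ae_of_all _ fun ω => (exp_pos _).le) hquad ?_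
        filter_upwards [hX0] with ω (hω : 0 ≤ X ω)
        simpa [neg_mul, mul_pow] using exp_neg_le_one_sub_add_sq_div_two (mul_nonneg ht hω)
    _ = 1 - t * ∫ ω, X ω ∂μ + t ^ 2 * (∫ ω, X ω ^ 2 ∂μ) / 2 := by
        rw [integral_add hlin ((hX2.const_mul _).div_const 2),
          integral_sub (integrable_const 1) (hX.const_mul t), integral_div, integral_const_mul,
          integral_const_mul]
        simp
    _ ≤ _ := by linarith [add_one_le_exp (t ^ 2 * (∫ ω, X ω ^ 2 ∂μ) / 2 - t * ∫ ω, X ω ∂μ)]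

theorem measureReal_sum_le_le_exp_of_nonneg {ι : Type*} [Fintype ι] {X : ι → Ω → ℝ}
    (hmeas : ∀ i, Measurable (X i)) (hindep : iIndepFun X μ) (hX0 : ∀ i, 0 ≤ᵐ[μ] X i)
    (hX2 : ∀ i, Integrable (fun ω => X i ω ^ 2) μ) {m v : ℝ} (hm : ∀ i, m ≤ ∫ ω, X i ω ∂μ)
    (hv : ∀ i, ∫ ω, X i ω ^ 2 ∂μ ≤ v) (a : ℝ) {t : ℝ} (ht : 0 ≤ t) :
    μ.real {ω | ∑ i, X i ω ≤ a} ≤ exp (t * a + Fintype.card ι * (t ^ 2 * v / 2 - t * m)) := by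
  have hX : ∀ i, Integrable (X i) μ := fun i =>
    ((memLp_two_iff_integrable_sq (hmeas i).aestronglyMeasurable).mpr (hX2 i)).integrable
      one_le_two
  have hexp : ∀ i ∈ Finset.univ, Integrable (fun ω => exp (-t * X i ω)) μ := fun i _ => by
    refine .of_bound ((hmeas i).const_mul _).exp.aestronglyMeasurable 1 ?_
    filter_upwards [hX0 i] with ω (hω : 0 ≤ X i ω)
    rw [norm_of_nonneg (exp_pos _).le, exp_le_one_iff, neg_mul, neg_nonpos]
    exact mul_nonneg ht hω
  have hmgf : ∀ i, mgf (X i) μ (-t) ≤ exp (t ^ 2 * v / 2 - t * m) := fun i =>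
    (mgf_neg_le_exp_of_nonneg (hX0 i) (hX i) (hX2 i) ht).trans <| exp_le_exp.mpr <| by
      nlinarith [hm i, hv i]
  have hchernoff := measure_le_le_exp_mul_mgf a (neg_nonpos.mpr ht)
    (hindep.integrable_exp_mul_sum hmeas hexp)
  rw [hindep.mgf_sum hmeas, neg_neg] at hchernoff
  simp only [Finset.sum_apply] at hchernoff
  calc _ ≤ exp (t * a) * ∏ _i : ι, exp (t ^ 2 * v / 2 - t * m) :=
        hchernoff.trans <| by gcongr with i; exacts [fun i _ => mgf_nonneg, hmgf i]
    _ = _ := by rw [Finset.prod_const, ← exp_nat_mul, ← exp_add, Finset.card_univ]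

end ProbabilityTheory

theorem robust_budgeted_uncertainty_bound_general
    {Ω : Type*} [MeasurableSpace Ω] (μ : Measure Ω) [IsProbabilityMeasure μ]
    (n : ℕ) (hn : 0 < n) (Z : Fin n → Ω → ℝ)
    (hmeas : ∀ i, Measurable (Z i))
    (hindep : ProbabilityTheory.iIndepFun Z μ)
    (hsupp : ∀ i, ∀ᵐ ω ∂μ, Z i ω ∈ Set.Icc (-1 : ℝ) 1)
    (θ : ℝ) (hθ : 0 < θ)
    (hvar : ∀ i, ∫ ω, (Z i ω) ^ 2 ∂μ = θ)
    (c : ℝ) (hc : c < θ * Real.sqrt n) :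
    μ {ω | ∑ i, |Z i ω| ≤ c * Real.sqrt n} ≤
      ENNReal.ofReal (Real.exp (-(θ * Real.sqrt n - c) ^ 2 / (2 * θ))) := by
  set s := √(n : ℝ)
  have hθs : 0 < θ * s := mul_pos hθ (sqrt_pos.mpr (Nat.cast_pos.mpr hn))
  have hZ1 : ∀ i, ∀ᵐ ω ∂μ, |Z i ω| ≤ 1 := fun i => (hsupp i).mono fun ω hω => abs_le.mpr hω
  have hZ : ∀ i, Integrable (Z i) μ := fun i => .of_bound (hmeas i).aestronglyMeasurable 1 (hZ1 i)
  have hZ2 : ∀ i, Integrable (fun ω => |Z i ω| ^ 2) μ := fun i =>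
    .of_bound ((hmeas i).abs.pow_const 2).aestronglyMeasurable 1 <| (hZ1 i).mono fun ω hω => by
      rw [norm_of_nonneg (sq_nonneg _)]
      exact pow_le_one₀ (abs_nonneg _) hω
  have hsq : ∀ i, ∫ ω, |Z i ω| ^ 2 ∂μ = θ := fun i => by simpa only [sq_abs] using hvar i
  have hθ_le_mean : ∀ i, θ ≤ ∫ ω, |Z i ω| ∂μ := fun i =>
    hvar i ▸ integral_sq_le_integral_abs (hZ i) (hZ1 i)
  set t := (θ * s - c) / (θ * s)
  have hbound := measureReal_sum_le_le_exp_of_nonneg (fun i => (hmeas i).abs)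
    (hindep.comp (fun _ x => |x|) fun _ => measurable_abs)
    (fun i => ae_of_all _ fun ω => abs_nonneg (Z i ω)) hZ2 hθ_le_mean (fun i => (hsq i).le) (c * s)
    (div_pos (sub_pos.mpr hc) hθs).le
  have hexponent : t * (c * s) + n * (t ^ 2 * θ / 2 - t * θ) = -(θ * s - c) ^ 2 / (2 * θ) := by
    rw [← sq_sqrt (Nat.cast_nonneg n)]
    simp only [t, s]
    field_simp
    ring
  rw [Fintype.card_fin, hexponent] at hbound
  rw [← ofReal_measureReal]
  exact ENNReal.ofReal_le_ofReal hbound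

/-- **Proposition 1 (probability bound for the budgeted uncertainty set).**
Let `Z 1, …, Z n` be independent real random variables, each supported in `[-1,1]`,
with mean `0` and variance `θ > 0`.  Then for every `c` with `0 < c < θ·√n`,
`ℙ[∑ i, |Z i| ≤ c·√n] ≤ exp(-(θ·√n - c)² / (2θ))`. -/
theorem robust_budgeted_uncertainty_bound
    {Ω : Type*} [MeasurableSpace Ω] (μ : Measure Ω) [IsProbabilityMeasure μ]
    (n : ℕ) (hn : 0 < n) (Z : Fin n → Ω → ℝ)
    (hmeas : ∀ i, Measurable (Z i))
    (hindep : ProbabilityTheory.iIndepFun Z μ)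
    (hsupp : ∀ i, ∀ᵐ ω ∂μ, Z i ω ∈ Set.Icc (-1 : ℝ) 1)
    (θ : ℝ) (hθ : 0 < θ)
    (hmean : ∀ i, ∫ ω, Z i ω ∂μ = 0)
    (hvar : ∀ i, ∫ ω, (Z i ω) ^ 2 ∂μ = θ)
    (c : ℝ) (hc0 : 0 < c) (hc : c < θ * Real.sqrt n) :
    μ {ω | ∑ i, |Z i ω| ≤ c * Real.sqrt n} ≤
      ENNReal.ofReal (Real.exp (-(θ * Real.sqrt n - c) ^ 2 / (2 * θ))) :=
  robust_budgeted_uncertainty_bound_general μ n hn Z hmeas hindep hsupp θ hθ hvar c hc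
end

section
/- Let A ∈ ℝ^{m×n}, a ∈ ℝ^m, b ∈ ℝ^n, c ∈ ℝ, and r > 0; let υ ∈ ℝ and k ≥ 0. Then the robust quadratic inequality ‖Az + a‖₂² + bᵀz + c ≤ k·zᵀz + υ holds for all z ∈ ℝ^n with ‖z‖₂ ≤ r if and only if there exists λ ≥ 0 such that the block matrix [[I_m, a, A], [aᵀ, −c + υ − λr², −(1/2)bᵀ], [Aᵀ, −(1/2)b, (k+λ)I_n]] is positive semidefinite. -/
/-!
The block matrix is `fromBlocks 1 B Bᵀ D` with `B (t, z) = t a + A z`, and its Schur complement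
`D - BᵀB` is the matrix of `slack - λ · ball`, where `slack` and `ball` are the homogenizations of
the robust constraint and of the support set. By homogeneity the robust inequality says exactly
`ball ≥ 0 → slack ≥ 0`, and since `ball (1, 0) = r² > 0` the S-lemma turns this into
`∃ λ ≥ 0, slack ≥ λ · ball`.

S-lemma: if `Q x < 0 < Q y`, then `Q` vanishes at `x + s₁ y` and `x + s₂ y` with `s₁ < 0 < s₂`,
where `P ≥ 0`; interpolating the affine function `s ↦ Q y P (x + s y) - P y Q (x + s y)` between
them gives `P y Q x ≤ P x Q y`, so `λ = inf {P y / Q y | Q y > 0}` works.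
-/

open Matrix

/-- The block matrix
`[[I_m, a, A], [aᵀ, −c + υ − λr², −(1/2)bᵀ], [Aᵀ, −(1/2)b, (k+λ)I_n]]`. -/
noncomputable def quadBlockMat {m n : ℕ} (A : Matrix (Fin m) (Fin n) ℝ) (a : Fin m → ℝ)
    (b : Fin n → ℝ) (c υ lam r k : ℝ) :
    Matrix (Fin m ⊕ (Unit ⊕ Fin n)) (Fin m ⊕ (Unit ⊕ Fin n)) ℝ :=
  Matrix.of fun i j =>
    match i, j with
    | Sum.inl i, Sum.inl j => if i = j then 1 else 0
    | Sum.inl i, Sum.inr (Sum.inl _) => a i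
    | Sum.inl i, Sum.inr (Sum.inr j) => A i j
    | Sum.inr (Sum.inl _), Sum.inl j => a j
    | Sum.inr (Sum.inl _), Sum.inr (Sum.inl _) => -c + υ - lam * r ^ 2
    | Sum.inr (Sum.inl _), Sum.inr (Sum.inr j) => -(1 / 2) * b j
    | Sum.inr (Sum.inr i), Sum.inl j => A j i
    | Sum.inr (Sum.inr i), Sum.inr (Sum.inl _) => -(1 / 2) * b i
    | Sum.inr (Sum.inr i), Sum.inr (Sum.inr j) => if i = j then k + lam else 0

theorem exists_quadratic_roots_neg_pos {a b c : ℝ} (ha : 0 < a) (hc : c < 0) :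
    ∃ s₁ s₂ : ℝ, s₁ < 0 ∧ 0 < s₂ ∧ a * (s₁ * s₁) + b * s₁ + c = 0 ∧
      a * (s₂ * s₂) + b * s₂ + c = 0 := by
  have hpos : b ^ 2 < discrim a b c := by rw [discrim]; nlinarith
  set d := √(discrim a b c)
  have hdisc : discrim a b c = d * d := (Real.mul_self_sqrt ((sq_nonneg b).trans hpos.le)).symm
  have hb : |b| < d := abs_lt_of_sq_lt_sq (by rwa [sq d, ← hdisc]) (Real.sqrt_nonneg _)
  have hroot := quadratic_eq_zero_iff ha.ne' hdisc
  refine ⟨(-b - d) / (2 * a), (-b + d) / (2 * a), ?_, ?_, (hroot _).mpr (.inr rfl),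
    (hroot _).mpr (.inl rfl)⟩
  · exact div_neg_of_neg_of_pos (by linarith [neg_abs_le b]) (by positivity)
  · exact div_pos (by linarith [le_abs_self b]) (by positivity)

namespace QuadraticMap

variable {R M : Type*} [CommRing R] [AddCommGroup M] [Module R M]

theorem map_add_smul (Q : QuadraticMap R M R) (x y : M) (s : R) :
    Q (x + s • y) = Q x + s * polar Q x y + s * s * Q y := by
  rw [QuadraticMap.map_add Q, polar_smul_right, QuadraticMap.map_smul, smul_eq_mul, smul_eq_mul]
  ring

section Real

variable {V : Type*} [AddCommGroup V] [Module ℝ V] {P Q : QuadraticMap ℝ V ℝ}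

theorem mul_le_mul_of_nonneg_imp_nonneg (h : ∀ x, 0 ≤ Q x → 0 ≤ P x) {x y : V}
    (hx : Q x < 0) (hy : 0 < Q y) : P y * Q x ≤ P x * Q y := by
  obtain ⟨s₁, s₂, hs₁, hs₂, hroot₁, hroot₂⟩ :=
    exists_quadratic_roots_neg_pos (b := polar Q x y) hy hx
  have hP (s : ℝ) (hs : Q y * (s * s) + polar Q x y * s + Q x = 0) :
      0 ≤ P x + s * polar P x y + s * s * P y :=
    map_add_smul P x y s ▸ h _ (by rw [map_add_smul]; linarith)
  have key : (s₂ - s₁) * (P x * Q y - P y * Q x) =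
      s₂ * (Q y * (P x + s₁ * polar P x y + s₁ * s₁ * P y)) +
        (-s₁) * (Q y * (P x + s₂ * polar P x y + s₂ * s₂ * P y)) := by
    linear_combination (-(s₂ * P y)) * hroot₁ + (s₁ * P y) * hroot₂
  have : 0 ≤ (s₂ - s₁) * (P x * Q y - P y * Q x) := by
    rw [key]
    exact add_nonneg (mul_nonneg hs₂.le (mul_nonneg hy.le (hP s₁ hroot₁)))
      (mul_nonneg (neg_nonneg.mpr hs₁.le) (mul_nonneg hy.le (hP s₂ hroot₂)))
  linarith [nonneg_of_mul_nonneg_right this (by linarith : 0 < s₂ - s₁)]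

theorem s_lemma (hslater : ∃ x₀, 0 < Q x₀) :
    (∀ x, 0 ≤ Q x → 0 ≤ P x) ↔ ∃ lam : ℝ, 0 ≤ lam ∧ ∀ x, lam * Q x ≤ P x := by
  refine ⟨fun h => ?_, fun ⟨lam, hlam, hle⟩ x hx => (mul_nonneg hlam hx).trans (hle x)⟩
  set ratios := (fun y => P y / Q y) '' {y | 0 < Q y}
  have hne : ratios.Nonempty := let ⟨x₀, hx₀⟩ := hslater; ⟨_, x₀, hx₀, rfl⟩
  have hnonneg : ∀ ρ ∈ ratios, 0 ≤ ρ := by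
    rintro _ ⟨y, hy, rfl⟩
    exact div_nonneg (h y hy.le) hy.le
  refine ⟨sInf ratios, le_csInf hne hnonneg, fun x => ?_⟩
  rcases lt_trichotomy (Q x) 0 with hx | hx | hx
  · have : P x / Q x ≤ sInf ratios := by
      refine le_csInf hne ?_
      rintro _ ⟨y, hy, rfl⟩
      rw [div_le_iff_of_neg hx, div_mul_eq_mul_div, div_le_iff₀ hy]
      exact mul_le_mul_of_nonneg_imp_nonneg h hx hy
    exact (div_le_iff_of_neg hx).mp this
  · simpa [hx] using h x hx.ge
  · exact (le_div_iff₀ hx).mp (csInf_le ⟨0, hnonneg⟩ ⟨x, hx, rfl⟩)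

theorem forall_nonneg_imp_nonneg_iff_forall_eq_one (f : Module.Dual ℝ V)
    (hker : ∀ x, f x = 0 → 0 ≤ Q x → 0 ≤ P x) :
    (∀ x, 0 ≤ Q x → 0 ≤ P x) ↔ ∀ x, f x = 1 → 0 ≤ Q x → 0 ≤ P x := by
  refine ⟨fun h x _ => h x, fun h x hx => ?_⟩
  by_cases hfx : f x = 0
  · exact hker x hfx hx
  have hx' : x = f x • (f x)⁻¹ • x := by rw [smul_inv_smul₀ hfx]
  rw [hx', QuadraticMap.map_smul] at hx ⊢
  have hsq : 0 < f x * f x := mul_self_pos.mpr hfx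
  refine smul_nonneg hsq.le (h _ ?_ (nonneg_of_mul_nonneg_right hx hsq))
  rw [map_smul, smul_eq_mul, inv_mul_cancel₀ hfx]

end Real

end QuadraticMap

theorem Sum.forall_apply_inl_eq_iff {ι α : Type*} {p : (Unit ⊕ ι → α) → Prop} {t : α} :
    (∀ x : Unit ⊕ ι → α, x (.inl ()) = t → p x) ↔ ∀ z, p (Sum.elim (fun _ => t) z) := by
  refine ⟨fun h z => h _ rfl, fun h x hx => ?_⟩
  convert h (x ∘ Sum.inr)
  ext (⟨⟩ | i) <;> simp [hx]

namespace Matrix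

variable {R ι κ : Type*} [CommRing R] [Fintype ι] [DecidableEq ι]

theorem toQuadraticForm'_apply (M : Matrix ι ι R) (x : ι → R) :
    M.toQuadraticForm' x = x ⬝ᵥ M *ᵥ x := by
  simp [toQuadraticForm', toLinearMap₂'_apply']

theorem toQuadraticForm'_sub_conjTranspose_mul_self [StarRing R] [TrivialStar R] [Fintype κ]
    (M : Matrix ι ι R) (B : Matrix κ ι R) (x : ι → R) :
    (M - Bᴴ * B).toQuadraticForm' x = M.toQuadraticForm' x - (B *ᵥ x) ⬝ᵥ (B *ᵥ x) := by
  rw [toQuadraticForm'_apply, toQuadraticForm'_apply, sub_mulVec, dotProduct_sub, ← mulVec_mulVec,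
    conjTranspose_eq_transpose_of_trivial, dotProduct_mulVec x Bᵀ, vecMul_transpose]

theorem replicateCol_unit_mulVec (w : κ → R) (t : R) :
    replicateCol Unit w *ᵥ (fun _ => t) = t • w := by
  ext
  simp [mulVec, dotProduct, mul_comm]

theorem posSemidef_sub_smul_iff {M N : Matrix ι ι ℝ} (hM : M.IsHermitian) (hN : N.IsHermitian)
    (lam : ℝ) :
    (M - lam • N).PosSemidef ↔ ∀ x, lam * N.toQuadraticForm' x ≤ M.toQuadraticForm' x := by
  simp only [posSemidef_iff_dotProduct_mulVec, hM.sub (hN.smul (IsSelfAdjoint.all lam)),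
    true_and, toQuadraticForm'_apply, sub_mulVec, smul_mulVec, dotProduct_sub, dotProduct_smul,
    star_trivial, smul_eq_mul, sub_nonneg]

end Matrix

section RobustQuadratic

variable {m n : ℕ}

/-! A vector `x : Unit ⊕ Fin n → ℝ` stands for `(t, z)`; `slackForm` is
`k zᵀz + υ t² - (‖A z + t a‖² + t bᵀz + c t²)` and `ballForm` is `r² t² - zᵀz`. -/

def homogenizedAffineMat (A : Matrix (Fin m) (Fin n) ℝ) (a : Fin m → ℝ) :
    Matrix (Fin m) (Unit ⊕ Fin n) ℝ :=
  fromCols (replicateCol Unit a) A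

noncomputable def homogenizedObjectiveMat (b : Fin n → ℝ) (c υ k : ℝ) :
    Matrix (Unit ⊕ Fin n) (Unit ⊕ Fin n) ℝ :=
  fromBlocks ((-c + υ) • 1) (-(1 / 2 : ℝ) • replicateRow Unit b)
    (-(1 / 2 : ℝ) • replicateCol Unit b) (k • 1)

def homogenizedBallMat (r : ℝ) : Matrix (Unit ⊕ Fin n) (Unit ⊕ Fin n) ℝ :=
  diagonal (Sum.elim (fun _ => r ^ 2) (fun _ => -1))

noncomputable def slackForm (A : Matrix (Fin m) (Fin n) ℝ) (a : Fin m → ℝ) (b : Fin n → ℝ)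
    (c υ k : ℝ) : QuadraticForm ℝ (Unit ⊕ Fin n → ℝ) :=
  (homogenizedObjectiveMat b c υ k -
    (homogenizedAffineMat A a)ᴴ * homogenizedAffineMat A a).toQuadraticForm'

noncomputable def ballForm (r : ℝ) : QuadraticForm ℝ (Unit ⊕ Fin n → ℝ) :=
  (homogenizedBallMat r).toQuadraticForm'

theorem quadBlockMat_eq_fromBlocks (A : Matrix (Fin m) (Fin n) ℝ) (a : Fin m → ℝ)
    (b : Fin n → ℝ) (c υ lam r k : ℝ) :
    quadBlockMat A a b c υ lam r k = fromBlocks 1 (homogenizedAffineMat A a)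
      (homogenizedAffineMat A a)ᴴ
      (homogenizedObjectiveMat b c υ k - lam • homogenizedBallMat r) := by
  ext (i | i | i) (j | j | j) <;>
    simp [quadBlockMat, homogenizedAffineMat, homogenizedObjectiveMat, homogenizedBallMat,
      one_apply, diagonal_apply, sub_eq_add_neg, neg_ite, ite_add_ite]

theorem quadBlockMat_posSemidef_iff (A : Matrix (Fin m) (Fin n) ℝ) (a : Fin m → ℝ)
    (b : Fin n → ℝ) (c υ lam r k : ℝ) :
    (quadBlockMat A a b c υ lam r k).PosSemidef ↔
      ∀ x, lam * ballForm r x ≤ slackForm A a b c υ k x := by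
  have hobj : (homogenizedObjectiveMat b c υ k).IsHermitian := by
    refine .fromBlocks ?_ ?_ ?_ <;> simp [IsHermitian]
  have : Invertible (1 : Matrix (Fin m) (Fin m) ℝ) := invertibleOne
  rw [quadBlockMat_eq_fromBlocks, PosDef.fromBlocks₁₁ _ _ PosDef.one, inv_one, Matrix.mul_one,
    sub_right_comm]
  exact posSemidef_sub_smul_iff (hobj.sub (isHermitian_conjTranspose_mul_self _))
    (isHermitian_diagonal _) lam

theorem homogenizedAffineMat_mulVec_sumElim (A : Matrix (Fin m) (Fin n) ℝ) (a : Fin m → ℝ)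
    (t : ℝ) (z : Fin n → ℝ) :
    homogenizedAffineMat A a *ᵥ Sum.elim (fun _ => t) z = t • a + A *ᵥ z := by
  rw [homogenizedAffineMat, fromCols_mulVec, Sum.elim_comp_inl, Sum.elim_comp_inr,
    replicateCol_unit_mulVec]

theorem homogenizedObjectiveMat_apply_sumElim (b : Fin n → ℝ) (c υ k t : ℝ) (z : Fin n → ℝ) :
    (homogenizedObjectiveMat b c υ k).toQuadraticForm' (Sum.elim (fun _ => t) z) =
      (υ - c) * (t * t) - t * (b ⬝ᵥ z) + k * (z ⬝ᵥ z) := by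
  simp only [homogenizedObjectiveMat, neg_smul, toQuadraticForm'_apply, fromBlocks_mulVec,
    Sum.elim_comp_inl, smul_mulVec, one_mulVec, Sum.elim_comp_inr, neg_mulVec,
    replicateRow_mulVec_eq_const, Function.smul_const, smul_eq_mul, replicateCol_unit_mulVec,
    sumElim_dotProduct_sumElim, dotProduct_add, dotProduct_smul, dotProduct_pUnit, dotProduct_neg,
    Function.const_apply, dotProduct_comm z b]
  ring

theorem slackForm_sumElim_one (A : Matrix (Fin m) (Fin n) ℝ) (a : Fin m → ℝ) (b : Fin n → ℝ)
    (c υ k : ℝ) (z : Fin n → ℝ) :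
    slackForm A a b c υ k (Sum.elim (fun _ => 1) z) =
      k * (z ⬝ᵥ z) + υ - (∑ i, ((A *ᵥ z) i + a i) ^ 2 + b ⬝ᵥ z + c) := by
  rw [slackForm, toQuadraticForm'_sub_conjTranspose_mul_self,
    homogenizedObjectiveMat_apply_sumElim, homogenizedAffineMat_mulVec_sumElim]
  simp only [mul_one, dotProduct, one_mul, one_smul, Pi.add_apply, add_comm, sq]
  ring

theorem ballForm_apply (r : ℝ) (x : Unit ⊕ Fin n → ℝ) :
    ballForm r x = r ^ 2 * (x (.inl ()) * x (.inl ())) - ∑ i, x (.inr i) ^ 2 := by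
  simp only [ballForm, homogenizedBallMat, sq, toQuadraticForm'_apply, dotProduct,
    mulVec_diagonal, Fintype.sum_sum_type, Finset.univ_unique, PUnit.default_eq_unit, Sum.elim_inl,
    Finset.sum_singleton, Sum.elim_inr, neg_mul, one_mul, mul_neg, Finset.sum_neg_distrib]
  ring

theorem eq_zero_of_ballForm_nonneg {r : ℝ} {x : Unit ⊕ Fin n → ℝ} (hx : x (.inl ()) = 0)
    (hQ : 0 ≤ ballForm r x) : x = 0 := by
  rw [ballForm_apply, hx, mul_zero, mul_zero, zero_sub, neg_nonneg] at hQ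
  have hsq := (Finset.sum_eq_zero_iff_of_nonneg fun i _ => sq_nonneg (x (.inr i))).mp
    (le_antisymm hQ (by positivity))
  ext (⟨⟩ | i)
  · exact hx
  · exact pow_eq_zero_iff two_ne_zero |>.mp (hsq i (Finset.mem_univ i))

end RobustQuadratic

theorem robust_quadratic_sdp_reformulation_general {m n : ℕ}
    (A : Matrix (Fin m) (Fin n) ℝ) (a : Fin m → ℝ) (b : Fin n → ℝ)
    (c r υ k : ℝ) (hr : 0 < r) :
    (∀ z : Fin n → ℝ, ∑ i, (z i) ^ 2 ≤ r ^ 2 →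
        ∑ i, (A.mulVec z i + a i) ^ 2 + b ⬝ᵥ z + c ≤ k * (z ⬝ᵥ z) + υ)
    ↔ ∃ lam : ℝ, 0 ≤ lam ∧ (quadBlockMat A a b c υ lam r k).PosSemidef := by
  set P := slackForm A a b c υ k
  set Q : QuadraticForm ℝ (Unit ⊕ Fin n → ℝ) := ballForm r
  have hslater : ∃ x₀, 0 < Q x₀ := ⟨Sum.elim (fun _ => 1) 0, by simp [Q, ballForm_apply, hr]⟩
  set t : Module.Dual ℝ (Unit ⊕ Fin n → ℝ) := LinearMap.proj (Sum.inl ())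
  have hker (x) (hx : t x = 0) (hQ : 0 ≤ Q x) : 0 ≤ P x := by
    rw [eq_zero_of_ballForm_nonneg hx hQ, map_zero]
  calc _ ↔ ∀ x, t x = 1 → 0 ≤ Q x → 0 ≤ P x := by
        simp only [t, LinearMap.proj_apply, Sum.forall_apply_inl_eq_iff, Q, P, ballForm_apply,
          slackForm_sumElim_one, Sum.elim_inl, Sum.elim_inr, mul_one, sub_nonneg]
    _ ↔ ∀ x, 0 ≤ Q x → 0 ≤ P x :=
        (QuadraticMap.forall_nonneg_imp_nonneg_iff_forall_eq_one t hker).symm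
    _ ↔ ∃ lam, 0 ≤ lam ∧ ∀ x, lam * Q x ≤ P x := QuadraticMap.s_lemma hslater
    _ ↔ _ := by simp only [Q, P, quadBlockMat_posSemidef_iff]

/-- **Proposition 3 (exact SDP reformulation of the quadratic robust satisficing constraint).**
For `r > 0` and `k ≥ 0`, the robust inequality
`‖Az + a‖₂² + bᵀz + c ≤ k·zᵀz + υ` for all `z` with `‖z‖₂ ≤ r`
holds iff there exists `λ ≥ 0` making the block matrix positive semidefinite. -/
theorem robust_quadratic_sdp_reformulation {m n : ℕ}
    (A : Matrix (Fin m) (Fin n) ℝ) (a : Fin m → ℝ) (b : Fin n → ℝ)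
    (c r υ k : ℝ) (hr : 0 < r) (hk : 0 ≤ k) :
    (∀ z : Fin n → ℝ, ∑ i, (z i) ^ 2 ≤ r ^ 2 →
        ∑ i, (A.mulVec z i + a i) ^ 2 + b ⬝ᵥ z + c ≤ k * (z ⬝ᵥ z) + υ)
    ↔ ∃ lam : ℝ, 0 ≤ lam ∧ (quadBlockMat A a b c υ lam r k).PosSemidef :=
  robust_quadratic_sdp_reformulation_general A a b c r υ k hr
end

section
/- Let ℓ : ℝ^n → ℝ be a differentiable convex function whose epigraph epi(ℓ) = {(w,v) ∈ ℝ^n × ℝ : ℓ(w) ≤ v} contains no line. Define the perspective cone K_ℓ = {(w, v₁, v₂) ∈ ℝ^n × ℝ × ℝ₊ : v₂·ℓ(w/v₂) ≤ v₁}, where for v₂ = 0 the perspective is defined by 0·ℓ(w/0) := sup_{u ∈ ℝ^n} ∇ℓ(u)ᵀw. Then K_ℓ = {(w, v₁, v₂) ∈ ℝ^n × ℝ × ℝ₊ : ∇ℓ(u)ᵀ(w − v₂·u) + v₂·ℓ(u) ≤ v₁ for all u ∈ ℝ^n}, and K_ℓ is a proper cone: it is a closed convex cone, it is solid (has nonempty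 interior in ℝ^{n+2}), and it is pointed (K_ℓ ∩ (−K_ℓ) = {0}). -/
open scoped Classical

lemma grad_le {n : ℕ} {ℓ : (Fin n → ℝ) → ℝ} (hdiff : Differentiable ℝ ℓ)
    (hconv : ConvexOn ℝ Set.univ ℓ) (u x : Fin n → ℝ) :
    ℓ u + fderiv ℝ ℓ u (x - u) ≤ ℓ x := by
  set g : ℝ → ℝ := fun t => ℓ (u + t • (x - u)) with hg
  have hc : ∀ t : ℝ, HasDerivAt g (fderiv ℝ ℓ (u + t • (x - u)) (x - u)) t := by
    intro t
    have h1 : HasDerivAt (fun t : ℝ => u + t • (x - u)) (x - u) t := by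
      simpa using ((hasDerivAt_id t).smul_const (x - u)).const_add u
    exact (hdiff (u + t • (x - u))).hasFDerivAt.comp_hasDerivAt t h1
  have hgc : ConvexOn ℝ Set.univ g := by
    have := hconv.comp_affineMap (AffineMap.lineMap u x)
    have hfun : g = ℓ ∘ (AffineMap.lineMap u x) := by
      funext t
      simp [hg, AffineMap.lineMap_apply_module', add_comm]
    rw [hfun]
    simpa using this
  have hsl := hgc.le_slope_of_hasDerivAt (Set.mem_univ (0:ℝ)) (Set.mem_univ (1:ℝ))
    one_pos (by simpa using hc 0)
  have h0 : g 0 = ℓ u := by simp [hg]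
  have h1 : g 1 = ℓ x := by simp [hg]
  rw [slope_def_field] at hsl
  simp [h0, h1] at hsl
  have hms := (fderiv ℝ ℓ u).map_sub x u
  rw [hms]
  linarith [hsl]

/-- **Proposition 4 (the perspective cone is a proper cone).**
For a differentiable convex `ℓ : ℝⁿ → ℝ` whose epigraph contains no line, the perspective
cone `K_ℓ = {(w,v₁,v₂) : v₂ ≥ 0, v₂·ℓ(w/v₂) ≤ v₁}` (with `0·ℓ(w/0) = sup_u ∇ℓ(u)ᵀw`)
equals `{(w,v₁,v₂) : v₂ ≥ 0, ∀ u, ∇ℓ(u)ᵀ(w − v₂u) + v₂ℓ(u) ≤ v₁}`, and it is a closed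
convex cone that is solid and pointed. -/
theorem perspective_cone_proper {n : ℕ} (ℓ : (Fin n → ℝ) → ℝ)
    (hdiff : Differentiable ℝ ℓ) (hconv : ConvexOn ℝ Set.univ ℓ)
    (hline : ¬ ∃ p e : (Fin n → ℝ) × ℝ, e ≠ 0 ∧
      ∀ t : ℝ, p + t • e ∈ {q : (Fin n → ℝ) × ℝ | ℓ q.1 ≤ q.2})
    (K : Set ((Fin n → ℝ) × ℝ × ℝ))
    (hK : K = {q | 0 ≤ q.2.2 ∧
      (if q.2.2 = 0 then ∀ u : Fin n → ℝ, fderiv ℝ ℓ u q.1 ≤ q.2.1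
       else q.2.2 * ℓ (q.2.2⁻¹ • q.1) ≤ q.2.1)}) :
    K = {q | 0 ≤ q.2.2 ∧
        ∀ u : Fin n → ℝ, fderiv ℝ ℓ u (q.1 - q.2.2 • u) + q.2.2 * ℓ u ≤ q.2.1} ∧
    IsClosed K ∧
    Convex ℝ K ∧
    (∀ q ∈ K, ∀ t : ℝ, 0 ≤ t → t • q ∈ K) ∧
    (interior K).Nonempty ∧
    K ∩ (-K) = {(0 : (Fin n → ℝ) × ℝ × ℝ)} := by
  -- ### Part 1: the set equality
  have hKS : K = {q : (Fin n → ℝ) × ℝ × ℝ | 0 ≤ q.2.2 ∧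
      ∀ u : Fin n → ℝ, fderiv ℝ ℓ u (q.1 - q.2.2 • u) + q.2.2 * ℓ u ≤ q.2.1} := by
    rw [hK]
    ext ⟨w, v₁, v₂⟩
    simp only [Set.mem_setOf_eq]
    constructor
    · rintro ⟨hv, h⟩
      refine ⟨hv, fun u => ?_⟩
      by_cases h0 : v₂ = 0
      · subst h0
        rw [if_pos rfl] at h
        simpa using h u
      · rw [if_neg h0] at h
        have hg := grad_le hdiff hconv u (v₂⁻¹ • w)
        have hmul := mul_le_mul_of_nonneg_left hg hv
        have key : v₂ * (fderiv ℝ ℓ u (v₂⁻¹ • w - u)) = fderiv ℝ ℓ u (w - v₂ • u) := by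
          have hms := (fderiv ℝ ℓ u).map_smul v₂ (v₂⁻¹ • w - u)
          rw [smul_eq_mul] at hms
          rw [← hms]
          congr 1
          rw [smul_sub, smul_smul, mul_inv_cancel₀ h0, one_smul]
        nlinarith [hmul, key]
    · rintro ⟨hv, h⟩
      refine ⟨hv, ?_⟩
      by_cases h0 : v₂ = 0
      · rw [if_pos h0]
        intro u
        have hu := h u
        subst h0
        simpa using hu
      · rw [if_neg h0]
        have hu := h (v₂⁻¹ • w)
        have hz : w - v₂ • v₂⁻¹ • w = 0 := by
          rw [smul_smul, mul_inv_cancel₀ h0, one_smul, sub_self]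
        rw [hz, map_zero, zero_add] at hu
        exact hu
  -- ### Part 2: closedness
  have hclosed : IsClosed K := by
    rw [hKS]
    have hrw : {q : (Fin n → ℝ) × ℝ × ℝ | 0 ≤ q.2.2 ∧
        ∀ u : Fin n → ℝ, fderiv ℝ ℓ u (q.1 - q.2.2 • u) + q.2.2 * ℓ u ≤ q.2.1} =
        {q : (Fin n → ℝ) × ℝ × ℝ | 0 ≤ q.2.2} ∩
        ⋂ u : Fin n → ℝ, {q : (Fin n → ℝ) × ℝ × ℝ |
          fderiv ℝ ℓ u (q.1 - q.2.2 • u) + q.2.2 * ℓ u ≤ q.2.1} := by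
      ext q
      simp [Set.mem_iInter]
    rw [hrw]
    refine IsClosed.inter (isClosed_le continuous_const (by fun_prop)) ?_
    refine isClosed_iInter fun u => ?_
    refine isClosed_le ?_ (by fun_prop)
    have hc1 : Continuous fun q : (Fin n → ℝ) × ℝ × ℝ => q.1 - q.2.2 • u := by fun_prop
    exact ((fderiv ℝ ℓ u).continuous.comp hc1).add (by fun_prop)
  -- ### Part 3: convexity
  have hconvK : Convex ℝ K := by
    rw [hKS]
    rintro ⟨w, v₁, v₂⟩ ⟨hv, hq⟩ ⟨w', v₁', v₂'⟩ ⟨hv', hq'⟩ a b ha hb hab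
    simp only [Prod.smul_mk, Prod.mk_add_mk, smul_eq_mul, Set.mem_setOf_eq]
    constructor
    · exact add_nonneg (mul_nonneg ha hv) (mul_nonneg hb hv')
    · intro u
      have h1 := mul_le_mul_of_nonneg_left (hq u) ha
      have h2 := mul_le_mul_of_nonneg_left (hq' u) hb
      have e1 : fderiv ℝ ℓ u ((a • w + b • w') - (a * v₂ + b * v₂') • u) =
          a * fderiv ℝ ℓ u (w - v₂ • u) + b * fderiv ℝ ℓ u (w' - v₂' • u) := by
        rw [show (a * fderiv ℝ ℓ u (w - v₂ • u) : ℝ) = fderiv ℝ ℓ u (a • (w - v₂ • u)) by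
              rw [map_smul]; rfl,
            show (b * fderiv ℝ ℓ u (w' - v₂' • u) : ℝ) = fderiv ℝ ℓ u (b • (w' - v₂' • u)) by
              rw [map_smul]; rfl,
            ← map_add]
        congr 1
        module
      rw [e1]
      nlinarith [h1, h2]
  -- ### Part 4: cone
  have hcone : ∀ q ∈ K, ∀ t : ℝ, 0 ≤ t → t • q ∈ K := by
    rw [hKS]
    rintro ⟨w, v₁, v₂⟩ ⟨hv, hq⟩ t ht
    simp only [Prod.smul_mk, smul_eq_mul, Set.mem_setOf_eq]
    constructor
    · exact mul_nonneg ht hv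
    · intro u
      have h1 := mul_le_mul_of_nonneg_left (hq u) ht
      have e1 : fderiv ℝ ℓ u (t • w - (t * v₂) • u) = t * fderiv ℝ ℓ u (w - v₂ • u) := by
        rw [show (t * fderiv ℝ ℓ u (w - v₂ • u) : ℝ) = fderiv ℝ ℓ u (t • (w - v₂ • u)) by
              rw [map_smul]; rfl]
        congr 1
        module
      rw [e1]
      nlinarith [h1]
  -- ### Part 5: interior nonempty
  have hint : (interior K).Nonempty := by
    set φ : (Fin n → ℝ) × ℝ × ℝ → ℝ := fun q => q.2.2 * ℓ (q.2.2⁻¹ • q.1) - q.2.1 with hφ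
    set V : Set ((Fin n → ℝ) × ℝ × ℝ) := {q | 0 < q.2.2} with hV
    have hVopen : IsOpen V := by
      have : V = (fun q : (Fin n → ℝ) × ℝ × ℝ => q.2.2) ⁻¹' Set.Ioi 0 := rfl
      rw [this]
      exact (by fun_prop : Continuous fun q : (Fin n → ℝ) × ℝ × ℝ => q.2.2).isOpen_preimage _
        isOpen_Ioi
    have hφc : ContinuousOn φ V := by
      have hinv : ContinuousOn (fun q : (Fin n → ℝ) × ℝ × ℝ => q.2.2⁻¹) V := by
        apply ContinuousOn.inv₀
        · fun_prop
        · intro q hq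
          exact ne_of_gt hq
      have hsm : ContinuousOn (fun q : (Fin n → ℝ) × ℝ × ℝ => q.2.2⁻¹ • q.1) V :=
        hinv.smul (by fun_prop)
      have hl : ContinuousOn (fun q : (Fin n → ℝ) × ℝ × ℝ => ℓ (q.2.2⁻¹ • q.1)) V :=
        hdiff.continuous.comp_continuousOn hsm
      exact ((by fun_prop : ContinuousOn (fun q : (Fin n → ℝ) × ℝ × ℝ => q.2.2) V).mul hl).sub
        (by fun_prop)
    have hUopen : IsOpen (V ∩ φ ⁻¹' Set.Iio 0) :=
      hφc.isOpen_inter_preimage hVopen isOpen_Iio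
    have hUK : V ∩ φ ⁻¹' Set.Iio 0 ⊆ K := by
      rintro ⟨w, v₁, v₂⟩ ⟨hq1, hq2⟩
      rw [hK]
      simp only [Set.mem_setOf_eq]
      have hv2 : (0:ℝ) < v₂ := hq1
      refine ⟨le_of_lt hv2, ?_⟩
      rw [if_neg (ne_of_gt hv2)]
      have : v₂ * ℓ (v₂⁻¹ • w) - v₁ < 0 := hq2
      linarith
    have hpt : ((0 : Fin n → ℝ), ℓ 0 + 1, (1:ℝ)) ∈ V ∩ φ ⁻¹' Set.Iio 0 := by
      constructor
      · simp only [hV, Set.mem_setOf_eq]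
        norm_num
      · simp [hφ]
    exact ⟨_, interior_maximal hUK hUopen hpt⟩
  -- ### Part 6: pointedness
  have hpointed : K ∩ (-K) = {(0 : (Fin n → ℝ) × ℝ × ℝ)} := by
    rw [hKS]
    ext ⟨w, v₁, v₂⟩
    simp only [Set.mem_inter_iff, Set.mem_neg, Set.mem_setOf_eq, Set.mem_singleton_iff,
      Prod.neg_mk]
    constructor
    · rintro ⟨⟨hv, hq⟩, hv', hq'⟩
      have hv2 : v₂ = 0 := le_antisymm (by linarith [hv']) hv
      subst hv2
      have heq : ∀ u : Fin n → ℝ, fderiv ℝ ℓ u w = v₁ := by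
        intro u
        have h1 := hq u
        have h2 := hq' u
        simp only [neg_zero, zero_smul, sub_zero, zero_mul, add_zero, map_neg] at h1 h2
        linarith
      by_cases hw0 : w = 0
      · subst hw0
        have := heq 0
        simp only [map_zero] at this
        simp [← this]
      · exfalso
        apply hline
        refine ⟨((0 : Fin n → ℝ), ℓ 0), (w, v₁), ?_, ?_⟩
        · intro hcon
          rw [Prod.ext_iff] at hcon
          exact hw0 hcon.1
        · intro t
          have hF : ∀ s : ℝ, HasDerivAt (fun s : ℝ => ℓ (s • w) - s * v₁) 0 s := by
            intro s
            have h1 : HasDerivAt (fun s : ℝ => s • w) w s := by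
              simpa using (hasDerivAt_id s).smul_const w
            have h2 := (hdiff (s • w)).hasFDerivAt.comp_hasDerivAt s h1
            have h3 : HasDerivAt (fun s : ℝ => s * v₁) v₁ s := hasDerivAt_mul_const v₁
            have h4 := h2.sub h3
            rwa [heq (s • w), sub_self] at h4
          have hFc : ℓ (t • w) - t * v₁ = ℓ 0 := by
            have := is_const_of_deriv_eq_zero (f := fun s : ℝ => ℓ (s • w) - s * v₁)
              (fun s => (hF s).differentiableAt) (fun s => (hF s).deriv) t 0
            simpa using this
          simp only [Set.mem_setOf_eq, Prod.smul_mk, Prod.mk_add_mk, smul_eq_mul, zero_add]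
          linarith [hFc]
    · intro h
      obtain ⟨h1, h2, h3⟩ : w = 0 ∧ v₁ = 0 ∧ v₂ = 0 := by
        simpa [Prod.ext_iff] using h
      subst h1; subst h2; subst h3
      refine ⟨⟨le_refl _, fun u => ?_⟩, by norm_num, fun u => ?_⟩ <;> simp
  exact ⟨hKS, hclosed, hconvK, hcone, hint, hpointed⟩
end

section
/- Let ℓ : ℝ → ℝ be a differentiable convex function and let w̲ ≤ w̄ be real numbers. Then sup_{v ∈ [w̲, w̄]} (ℓ'(v)·v − ℓ(v)) = max{ ℓ'(w̲)·w̲ − ℓ(w̲), ℓ'(w̄)·w̄ − ℓ(w̄) }; that is, the function v ↦ ℓ'(v)·v − ℓ(v) attains its maximum over the interval [w̲, w̄] at one of the two endpoints. -/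
/-- **Proposition 5 (perspective depth of a univariate convex function is attained at
an endpoint).**  For a differentiable convex `ℓ : ℝ → ℝ` and `lo ≤ hi`, the function
`v ↦ ℓ'(v)·v − ℓ(v)` attains its maximum over `[lo, hi]` at one of the two endpoints,
i.e. `max{ℓ'(lo)·lo − ℓ(lo), ℓ'(hi)·hi − ℓ(hi)}` is the greatest value of this
function on `[lo, hi]`. -/
theorem perspective_depth_endpoints (ℓ : ℝ → ℝ)
    (hdiff : Differentiable ℝ ℓ) (hconv : ConvexOn ℝ Set.univ ℓ)
    (lo hi : ℝ) (hle : lo ≤ hi) :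
    IsGreatest ((fun v => deriv ℓ v * v - ℓ v) '' Set.Icc lo hi)
      (max (deriv ℓ lo * lo - ℓ lo) (deriv ℓ hi * hi - ℓ hi)) := by
  have hmono : MonotoneOn (deriv ℓ) Set.univ :=
    hconv.monotoneOn_deriv (fun x _ => hdiff x)
  constructor
  · rcases max_choice (deriv ℓ lo * lo - ℓ lo) (deriv ℓ hi * hi - ℓ hi) with h | h <;> rw [h]
    · exact ⟨lo, Set.left_mem_Icc.mpr hle, rfl⟩
    · exact ⟨hi, Set.right_mem_Icc.mpr hle, rfl⟩
  · rintro x ⟨v, ⟨hv1, hv2⟩, rfl⟩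
    show deriv ℓ v * v - ℓ v ≤ _
    rcases le_total 0 v with hv0 | hv0
    · -- compare with hi
      refine le_trans ?_ (le_max_right _ _)
      rcases eq_or_lt_of_le hv2 with rfl | hlt
      · exact le_refl _
      · have hslope : slope ℓ v hi ≤ deriv ℓ hi :=
          hconv.slope_le_deriv (Set.mem_univ v) (Set.mem_univ hi) hlt (hdiff hi)
        have hsl : (ℓ hi - ℓ v) / (hi - v) ≤ deriv ℓ hi := by
          rwa [slope_def_field] at hslope
        have h1 : ℓ hi - ℓ v ≤ deriv ℓ hi * (hi - v) := by
          have := (div_le_iff₀ (by linarith)).mp hsl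
          linarith
        have h2 : deriv ℓ v ≤ deriv ℓ hi :=
          hmono (Set.mem_univ v) (Set.mem_univ hi) hlt.le
        nlinarith [mul_nonneg hv0 (sub_nonneg.mpr h2)]
    · -- compare with lo
      refine le_trans ?_ (le_max_left _ _)
      rcases eq_or_lt_of_le hv1 with rfl | hlt
      · exact le_refl _
      · have hslope : deriv ℓ lo ≤ slope ℓ lo v :=
          hconv.deriv_le_slope (Set.mem_univ lo) (Set.mem_univ v) hlt (hdiff lo)
        have hsl : deriv ℓ lo ≤ (ℓ v - ℓ lo) / (v - lo) := by
          rwa [slope_def_field] at hslope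
        have h1 : deriv ℓ lo * (v - lo) ≤ ℓ v - ℓ lo := by
          have := (le_div_iff₀ (by linarith)).mp hsl
          linarith
        have h2 : deriv ℓ lo ≤ deriv ℓ v :=
          hmono (Set.mem_univ lo) (Set.mem_univ v) hlt.le
        nlinarith [mul_nonneg (neg_nonneg.mpr hv0) (sub_nonneg.mpr h2)]
end

section
/- Let ℓ : ℝ^n → ℝ be the log-sum-exp function ℓ(u) = log(∑_{i=1}^n exp(u_i)) and fix u ∈ ℝ^n. Define r(t) = ℓ(t·u) for t ∈ ℝ. Then lim_{t→∞} ( r'(t)·t − r(t) ) = −log(n̄), where n̄ = |{ i ∈ [n] : u_i = max_{j∈[n]} u_j }| is the number of components of u attaining the maximum value. -/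
/-!
Write `Φ(x) = ∇ℓ(x)ᵀx − ℓ(x)`, so that `r'(t)·t − r(t) = Φ(t·u)`. Adding a constant to every
coordinate of `x` leaves `Φ(x)` unchanged, so we may subtract `max u` and assume `u ≤ 0` with
equality exactly on the `n̄` maximising indices. Then, as `t → ∞`, `∑ᵢ exp(t uᵢ) → n̄` and
`∑ᵢ t uᵢ exp(t uᵢ) → 0` (since `x eˣ → 0` as `x → −∞`), whence `Φ(t·u) → 0 / n̄ − log n̄`.
-/

open Filter Real Finset
open scoped Topology

section LogSumExp

variable {ι : Type*} [Fintype ι]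

/-- `∇ℓ(x)ᵀx − ℓ(x)` for the log-sum-exp function `ℓ(x) = log ∑ᵢ exp xᵢ`. -/
noncomputable def logSumExpPerspective (x : ι → ℝ) : ℝ :=
  (∑ i, x i * exp (x i)) / (∑ i, exp (x i)) - log (∑ i, exp (x i))

lemma sum_exp_pos [Nonempty ι] (x : ι → ℝ) : 0 < ∑ i, exp (x i) :=
  sum_pos (fun i _ => exp_pos (x i)) univ_nonempty

lemma logSumExpPerspective_add_const [Nonempty ι] (x : ι → ℝ) (c : ℝ) :
    logSumExpPerspective (fun i => x i + c) = logSumExpPerspective x := by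
  have hS := (sum_exp_pos x).ne'
  have h_exp : ∑ i, exp (x i + c) = exp c * ∑ i, exp (x i) := by
    simp only [exp_add, mul_sum, mul_comm]
  have h_mul : ∑ i, (x i + c) * exp (x i + c)
      = exp c * (∑ i, x i * exp (x i) + c * ∑ i, exp (x i)) := by
    simp only [exp_add, mul_sum, ← sum_add_distrib]
    exact sum_congr rfl fun i _ => by ring
  unfold logSumExpPerspective
  rw [h_exp, h_mul, log_mul (exp_pos c).ne' hS, log_exp]
  field_simp
  ring

lemma hasDerivAt_log_sum_exp_mul [Nonempty ι] (u : ι → ℝ) (t : ℝ) :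
    HasDerivAt (fun s => log (∑ i, exp (s * u i)))
      ((∑ i, u i * exp (t * u i)) / ∑ i, exp (t * u i)) t := by
  have h_sum : HasDerivAt (fun s => ∑ i, exp (s * u i)) (∑ i, u i * exp (t * u i)) t :=
    HasDerivAt.fun_sum fun i _ => by
      simpa [mul_comm] using ((hasDerivAt_id t).mul_const (u i)).exp
  exact h_sum.log (sum_exp_pos _).ne'

lemma deriv_log_sum_exp_mul_mul_sub [Nonempty ι] (u : ι → ℝ) (t : ℝ) :
    deriv (fun s => log (∑ i, exp (s * u i))) t * t - log (∑ i, exp (t * u i))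
      = logSumExpPerspective fun i => t * u i := by
  rw [(hasDerivAt_log_sum_exp_mul u t).deriv, logSumExpPerspective, div_mul_eq_mul_div,
    sum_mul]
  congr 2
  exact sum_congr rfl fun i _ => by ring

lemma tendsto_mul_exp_atBot : Tendsto (fun x : ℝ => x * exp x) atBot (𝓝 0) := by
  have h := ((tendsto_pow_mul_exp_neg_atTop_nhds_zero 1).comp tendsto_neg_atBot_atTop).neg
  simpa using h

lemma tendsto_sum_exp_mul_atTop_of_nonpos {v : ι → ℝ} (hv : ∀ i, v i ≤ 0) :
    Tendsto (fun t => ∑ i, exp (t * v i)) atTop (𝓝 (#{i | v i = 0} : ℝ)) := by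
  rw [natCast_card_filter]
  refine tendsto_finsetSum _ fun i _ => ?_
  rcases (hv i).eq_or_lt with h | h
  · simp [h]
  · rw [if_neg h.ne]
    exact tendsto_exp_atBot.comp (tendsto_id.atTop_mul_const_of_neg h)

lemma tendsto_sum_mul_mul_exp_mul_atTop_of_nonpos {v : ι → ℝ} (hv : ∀ i, v i ≤ 0) :
    Tendsto (fun t => ∑ i, t * v i * exp (t * v i)) atTop (𝓝 0) := by
  rw [← sum_const_zero (s := (univ : Finset ι))]
  refine tendsto_finsetSum _ fun i _ => ?_
  rcases (hv i).eq_or_lt with h | h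
  · simp [h]
  · exact tendsto_mul_exp_atBot.comp (tendsto_id.atTop_mul_const_of_neg h)

lemma tendsto_logSumExpPerspective_mul_of_nonpos {v : ι → ℝ} (hv : ∀ i, v i ≤ 0)
    (h_zero : ∃ i, v i = 0) :
    Tendsto (fun t => logSumExpPerspective fun i => t * v i) atTop
      (𝓝 (-log #{i | v i = 0})) := by
  have h_card : (#{i | v i = 0} : ℝ) ≠ 0 := by
    obtain ⟨i, hi⟩ := h_zero
    exact_mod_cast (card_pos.2 ⟨i, mem_filter.2 ⟨mem_univ i, hi⟩⟩).ne'
  have h_sum := tendsto_sum_exp_mul_atTop_of_nonpos hv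
  have h := ((tendsto_sum_mul_mul_exp_mul_atTop_of_nonpos hv).div h_sum h_card).sub
    ((continuousAt_log h_card).tendsto.comp h_sum)
  rwa [zero_div, zero_sub] at h

theorem tendsto_logSumExpPerspective_mul [Nonempty ι] (u : ι → ℝ) :
    Tendsto (fun t => logSumExpPerspective fun i => t * u i) atTop
      (𝓝 (-log #{i | ∀ j, u j ≤ u i})) := by
  obtain ⟨i₀, hi₀⟩ := Finite.exists_max u
  have h_shift : ∀ t, (logSumExpPerspective fun i => t * u i)
      = logSumExpPerspective fun i => t * (u i - u i₀) := fun t => by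
    rw [← logSumExpPerspective_add_const _ (-(t * u i₀))]
    congr 1 with i
    ring
  have h_argmax : ∀ i, u i - u i₀ = 0 ↔ ∀ j, u j ≤ u i := fun i =>
    ⟨fun h j => (hi₀ j).trans (sub_eq_zero.1 h).ge,
      fun h => sub_eq_zero.2 ((hi₀ i).antisymm (h i₀))⟩
  simp_rw [h_shift, ← h_argmax]
  exact tendsto_logSumExpPerspective_mul_of_nonpos (fun i => sub_nonpos.2 (hi₀ i))
    ⟨i₀, sub_self _⟩

end LogSumExp

/-- **Limit of the perspective-depth expression along a ray for log-sum-exp.**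
For `u ∈ ℝⁿ` and `r(t) = log(∑ i, exp(t·u i))`, one has
`lim_{t→∞} (r'(t)·t − r(t)) = −log n̄`, where `n̄` is the number of indices `i`
attaining the maximum `max_j u j`. -/
theorem logsumexp_ray_perspective_limit {n : ℕ} (hn : 0 < n) (u : Fin n → ℝ)
    (r : ℝ → ℝ) (hr : ∀ t, r t = Real.log (∑ i, Real.exp (t * u i)))
    (nbar : ℕ)
    (hnbar : nbar = (Finset.univ.filter fun i : Fin n => ∀ j, u j ≤ u i).card) :
    Filter.Tendsto (fun t => deriv r t * t - r t) Filter.atTop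
      (nhds (-Real.log nbar)) := by
  have : Nonempty (Fin n) := ⟨⟨0, hn⟩⟩
  obtain rfl : r = fun t => log (∑ i, exp (t * u i)) := funext hr
  subst hnbar
  simp_rw [deriv_log_sum_exp_mul_mul_sub]
  convert tendsto_logSumExpPerspective_mul u
end

section
/- Let Z = {z ∈ ℝ^{n_z} : Hz ≤ h} be a nonempty polyhedron with h ≥ 0, and let p(ζ) = max{λᵀζ − η : (λ,η) ∈ V} with V = {(λ,η) ∈ ℝ^{n_z}×ℝ₊ : ∃μ ∈ ℝ^{n_μ}, Mλ + Nμ + sη ≤ t}, where V is bounded, contains the origin, and there exists μ̂ with Nμ̂ < t. Then for every a ∈ ℝ^{n_z} and every k ≥ 0, max_{z ∈ Z} ( aᵀz − k·p(z) ) = min{ βᵀh + η : β ∈ ℝ^{n_h}, β ≥ 0, η ≥ 0, and (a − Hᵀβ, η, k) ∈ V̄ }, where V̄ = {(λ, η, k) ∈ ℝ^{n_z} × ℝ₊ × ℝ₊ : ∃μ ∈ ℝ^{n_μ} with Mλ + Nμ + sη ≤ t·k} is the perspective cone of V. -/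
/-!
Weak duality: if `β, η ≥ 0` and `(a - Hᵀβ, η, k)` lies in the perspective cone, then for `k > 0`
the point `(a - Hᵀβ, η) / k` lies in `V`, so `(a - Hᵀβ)ᵀz - η ≤ k p(z)` and hence
`aᵀz - k p(z) ≤ βᵀHz + η ≤ βᵀh + η` on `Z`; for `k = 0` the whole ray through `(a - Hᵀβ, η)` lies
in the bounded set `V`, so `a = Hᵀβ`.

Strong duality: for `u ≥ 0` with `Nᵀu = 0` and `sᵀu ≥ -1`, weak LP duality for the inner
maximization gives `p(Mᵀu) ≤ tᵀu`. Hence every feasible point of the linear program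
`max {(Ma - kt)ᵀu : u ≥ 0, Nᵀu = 0, HMᵀu ≤ h, sᵀu ≥ -1}` is dominated by the value of
`aᵀz - k p(z)` at `z = Mᵀu ∈ Z`, and the LP dual of this program is exactly the minimization on the
right. LP duality, in the form "an upper bound `r` on the primal yields a dual point of value
`≤ r`", follows from Farkas' lemma: separate `b` from the cone `{Ax + w : x, w ≥ 0}`, which is
closed by the conic Carathéodory theorem.
-/

open Matrix Finset

section ConicCaratheodory

variable {ι E : Type*} [Fintype ι] [AddCommGroup E] [Module ℝ E]

namespace LinearMap

/-- Move from `x` along `-g` until a coordinate in the support of `x` reaches `0`. -/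
lemma exists_nonneg_eq_smaller_support (f : (ι → ℝ) →ₗ[ℝ] E) {x g : ι → ℝ} (hx : 0 ≤ x)
    (hgx : ∀ j, x j = 0 → g j = 0) (hg : f g = 0) (hg0 : g ≠ 0) :
    ∃ x', 0 ≤ x' ∧ f x' = f x ∧ (∀ j, x j = 0 → x' j = 0) ∧ ∃ j, x j ≠ 0 ∧ x' j = 0 := by
  wlog hpos : ∃ j, 0 < g j generalizing g
  · obtain ⟨j, hj⟩ := Function.ne_iff.mp hg0
    push Not at hpos
    exact this (g := -g) (fun i hi => by simp [hgx i hi]) (by simp [hg]) (neg_ne_zero.2 hg0)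
      ⟨j, by simpa using (hpos j).lt_of_ne hj⟩
  classical
  obtain ⟨j, hj, hjmin⟩ := ({j | 0 < g j} : Finset ι).exists_min_image (fun j => x j / g j)
    (by simpa [Finset.Nonempty] using hpos)
  simp only [mem_filter, mem_univ, true_and] at hj hjmin
  set τ := x j / g j
  have hτ : 0 ≤ τ := div_nonneg (hx j) hj.le
  refine ⟨x - τ • g, fun i => ?_, by simp [hg], fun i hi => by simp [hi, hgx i hi], j,
    fun hxj => hj.ne' (hgx j hxj), by simp [τ, hj.ne']⟩
  have hxi : 0 ≤ x i := hx i
  simp only [Pi.zero_apply, Pi.sub_apply, Pi.smul_apply, smul_eq_mul]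
  rcases lt_or_ge 0 (g i) with hgi | hgi
  · linarith [(le_div_iff₀ hgi).mp (hjmin i hgi)]
  · linarith [mul_nonpos_of_nonneg_of_nonpos hτ hgi]

theorem exists_nonneg_eq_injective_on_support (f : (ι → ℝ) →ₗ[ℝ] E) {x : ι → ℝ} (hx : 0 ≤ x) :
    ∃ x', 0 ≤ x' ∧ f x' = f x ∧ ∀ g, (∀ j, x' j = 0 → g j = 0) → f g = 0 → g = 0 := by
  classical
  induction hn : #{j | x j ≠ 0} using Nat.strong_induction_on generalizing x with
  | _ n ih =>
  by_cases H : ∀ g, (∀ j, x j = 0 → g j = 0) → f g = 0 → g = 0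
  · exact ⟨x, hx, rfl, H⟩
  push Not at H
  obtain ⟨g, hgx, hg, hg0⟩ := H
  obtain ⟨x', hx', hfx', hzero, j, hxj, hx'j⟩ := f.exists_nonneg_eq_smaller_support hx hgx hg hg0
  have hsub : ({j | x' j ≠ 0} : Finset ι) ⊂ ({j | x j ≠ 0} : Finset ι) :=
    (ssubset_iff_of_subset fun i => by simpa using mt (hzero i)).2
      ⟨j, by simpa using hxj, by simpa using hx'j⟩
  obtain ⟨x'', hx'', hfx'', hinj⟩ := ih _ (hn ▸ card_lt_card hsub) hx' rfl
  exact ⟨x'', hx'', hfx''.trans hfx', hinj⟩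

theorem isClosed_image_nonneg [TopologicalSpace E] [IsTopologicalAddGroup E]
    [ContinuousSMul ℝ E] [T2Space E] (f : (ι → ℝ) →ₗ[ℝ] E) :
    IsClosed (f '' {x | 0 ≤ x}) := by
  let W (s : Set ι) : Submodule ℝ (ι → ℝ) := Submodule.pi s fun _ => ⊥
  have hunion : f '' {x | 0 ≤ x} = ⋃ (s : Set ι) (_ : ker (f ∘ₗ (W s).subtype) = ⊥),
      (f ∘ₗ (W s).subtype) '' {w | 0 ≤ (w : ι → ℝ)} := by
    ext e
    simp only [Set.mem_image, Set.mem_iUnion]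
    constructor
    · rintro ⟨x, hx, rfl⟩
      obtain ⟨x', hx', hfx', hinj⟩ := f.exists_nonneg_eq_injective_on_support hx
      refine ⟨{j | x' j = 0}, ?_, ⟨x', by simp [W, Submodule.mem_pi]⟩, hx', hfx'⟩
      refine ker_eq_bot'.2 fun w hw => Subtype.ext (hinj w (fun j hj => ?_) hw)
      exact (Submodule.mem_bot ℝ).1 (Submodule.mem_pi.1 w.2 j hj)
    · rintro ⟨s, -, w, hw, rfl⟩
      exact ⟨w, hw, rfl⟩
  rw [hunion]
  refine isClosed_iUnion_of_finite fun s => isClosed_iUnion_of_finite fun hs => ?_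
  exact (isClosedEmbedding_of_injective hs).isClosedMap _
    (isClosed_Ici.preimage continuous_subtype_val)

end LinearMap

end ConicCaratheodory

section LinearProgramming

variable {m n : Type*} [Fintype m] [Fintype n]

theorem Matrix.inequality_farkas (A : Matrix m n ℝ) (b : m → ℝ)
    (h : ¬ ∃ x, 0 ≤ x ∧ A *ᵥ x ≤ b) : ∃ y, 0 ≤ y ∧ 0 ≤ y ᵥ* A ∧ b ⬝ᵥ y < 0 := by
  classical
  -- `f (x, w) = A x + w`
  let f := (fromCols A (1 : Matrix m m ℝ)).mulVecLin
  let C : ProperCone ℝ (m → ℝ) :=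
    ⟨(PointedCone.positive ℝ _).map (f.restrictScalars _), f.isClosed_image_nonneg⟩
  have hC : ∀ x, 0 ≤ x → f x ∈ C := fun x hx => ⟨x, hx, rfl⟩
  have hb : b ∉ C := by
    rintro ⟨x, hx, hxb⟩
    refine h ⟨x ∘ Sum.inl, fun j => hx _, fun i => ?_⟩
    have hxi : 0 ≤ x (Sum.inr i) := hx _
    have := congrFun hxb i
    simp [f] at this
    linarith
  obtain ⟨φ, hφC, hφb⟩ := C.hyperplane_separation_point hb
  set y : m → ℝ := fun i => φ (Pi.single i 1)
  have hφ : ∀ v, φ v = v ⬝ᵥ y := fun v => by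
    rw [show φ v = (φ : (m → ℝ) →ₗ[ℝ] ℝ) v from rfl, LinearMap.pi_apply_eq_sum_univ]
    refine Finset.sum_congr rfl fun i _ => ?_
    simp only [smul_eq_mul, y, ContinuousLinearMap.coe_coe]
    congr 2; ext j; simp [Pi.single_apply, eq_comm]
  have hsingle : ∀ i, f (Pi.single i 1) ∈ C := fun i => hC _ (Pi.single_nonneg.2 zero_le_one)
  refine ⟨y, fun i => ?_, fun j => ?_, hφ b ▸ hφb⟩
  · simpa [f, hφ, one_apply, dotProduct, Pi.single_apply] using hφC _ (hsingle (Sum.inr i))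
  · simpa [f, hφ, vecMul, dotProduct, mul_comm] using hφC _ (hsingle (Sum.inl j))

theorem Matrix.exists_dual_le_of_forall_primal_le (A : Matrix m n ℝ) (b : m → ℝ) (c : n → ℝ)
    (r : ℝ) (hP : ∃ x, 0 ≤ x ∧ A *ᵥ x ≤ b) (hr : ∀ x, 0 ≤ x → A *ᵥ x ≤ b → c ⬝ᵥ x ≤ r) :
    ∃ y, 0 ≤ y ∧ c ≤ y ᵥ* A ∧ b ⬝ᵥ y ≤ r := by
  obtain ⟨x₀, hx₀, hAx₀⟩ := hP
  by_contra H
  obtain ⟨w, hw, hwB, hwd⟩ := (fromRows (-Aᵀ) (replicateRow Unit b)).inequality_farkas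
    (Sum.elim (-c) fun _ => r) fun ⟨y, hy, hyB⟩ => H ⟨y, hy, by
      simpa [Pi.le_def, neg_mulVec, mulVec_transpose, replicateRow_mulVec_eq_const,
        dotProduct_comm b] using hyB⟩
  obtain ⟨x, θ, rfl⟩ : ∃ x θ, w = Sum.elim x fun _ => θ :=
    ⟨w ∘ Sum.inl, w (Sum.inr ()), by ext (i | ⟨⟩) <;> rfl⟩
  have hx : 0 ≤ x := fun j => hw (Sum.inl j)
  have hθ : 0 ≤ θ := hw (Sum.inr ())
  have hAx : A *ᵥ x ≤ θ • b := fun i => by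
    simpa [vecMul, dotProduct, replicateRow, mulVec, mul_comm] using hwB i
  have hcx : θ * r < c ⬝ᵥ x := by
    simpa [sumElim_dotProduct_sumElim, dotProduct, mul_comm] using hwd
  -- `(x + ε x₀) / (θ + ε)` is primal feasible with value `> r` for small `ε > 0`, also if `θ = 0`
  obtain ⟨ε, hε, hεlt⟩ := exists_pos_mul_lt (sub_pos.2 hcx) (r - c ⬝ᵥ x₀)
  have hσ : 0 < θ + ε := by linarith
  have hfeas : A *ᵥ ((θ + ε)⁻¹ • (x + ε • x₀)) ≤ b := fun i => by
    have h₁ := hAx i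
    have h₂ := hAx₀ i
    simp only [mulVec_smul, mulVec_add, Pi.smul_apply, Pi.add_apply, smul_eq_mul] at h₁ h₂ ⊢
    rw [inv_mul_le_iff₀ hσ]
    nlinarith
  have := hr _ (smul_nonneg (inv_nonneg.2 hσ.le) (add_nonneg hx (smul_nonneg hε.le hx₀))) hfeas
  rw [dotProduct_smul, dotProduct_add, dotProduct_smul, smul_eq_mul, smul_eq_mul,
    inv_mul_le_iff₀ hσ] at this
  nlinarith

end LinearProgramming

/-- If `S` is unbounded then `D = ∅`, and if `S = ∅` then `D` is unbounded below; in both cases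
the two sides are `0` by the conventions for `sSup` and `sInf` on `ℝ`. -/
theorem Real.sSup_eq_sInf_of_forall_le_of_forall_exists_le {S D : Set ℝ}
    (hle : ∀ w ∈ S, ∀ d ∈ D, w ≤ d) (hex : ∀ r, (∀ w ∈ S, w ≤ r) → ∃ d ∈ D, d ≤ r) :
    sSup S = sInf D := by
  rcases S.eq_empty_or_nonempty with rfl | hS
  · have hD : ¬ BddBelow D := fun ⟨l, hl⟩ => by
      obtain ⟨d, hd, hdl⟩ := hex (l - 1) (by simp)
      linarith [hl hd]
    rw [Real.sSup_empty, Real.sInf_of_not_bddBelow hD]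
  by_cases hB : BddAbove S
  · have hlow : ∀ d ∈ D, sSup S ≤ d := fun d hd => csSup_le hS fun w hw => hle w hw d hd
    obtain ⟨d, hd, hdS⟩ := hex (sSup S) fun w hw => le_csSup hB hw
    exact (IsLeast.csInf_eq ⟨le_antisymm hdS (hlow d hd) ▸ hd, hlow⟩).symm
  · have hD : D = ∅ :=
      Set.eq_empty_of_forall_notMem fun d hd => hB ⟨d, fun w hw => hle w hw d hd⟩
    rw [hD, Real.sInf_empty, Real.sSup_of_not_bddAbove hB]

theorem eq_zero_of_isBounded_of_forall_smul_mem {E : Type*} [NormedAddCommGroup E]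
    [NormedSpace ℝ E] {V : Set E} (hV : Bornology.IsBounded V) {v : E}
    (hv : ∀ τ : ℝ, 0 ≤ τ → τ • v ∈ V) : v = 0 := by
  obtain ⟨R, hR⟩ := hV.exists_norm_le
  by_contra h
  have hpos : 0 < ‖v‖ := norm_pos_iff.2 h
  have := hR _ (hv ((|R| + 1) / ‖v‖) (by positivity))
  rw [norm_smul, Real.norm_of_nonneg (by positivity), div_mul_cancel₀ _ hpos.ne'] at this
  linarith [le_abs_self R]

section Penalty

variable {ι : Type*} [Fintype ι]

noncomputable def penalty (V : Set ((ι → ℝ) × ℝ)) (ζ : ι → ℝ) : ℝ :=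
  sSup {v : ℝ | ∃ le ∈ V, v = le.1 ⬝ᵥ ζ - le.2}

theorem le_penalty {V : Set ((ι → ℝ) × ℝ)} (hV : Bornology.IsBounded V) {le : (ι → ℝ) × ℝ}
    (hle : le ∈ V) (ζ : ι → ℝ) : le.1 ⬝ᵥ ζ - le.2 ≤ penalty V ζ := by
  have hbdd : BddAbove ((fun le : (ι → ℝ) × ℝ => le.1 ⬝ᵥ ζ - le.2) '' closure V) :=
    hV.isCompact_closure.bddAbove_image (by fun_prop)
  refine le_csSup (hbdd.mono ?_) ⟨le, hle, rfl⟩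
  rintro _ ⟨le, hle, rfl⟩
  exact ⟨le, subset_closure hle, rfl⟩

theorem penalty_le {V : Set ((ι → ℝ) × ℝ)} (hV : V.Nonempty) {ζ : ι → ℝ} {B : ℝ}
    (h : ∀ le ∈ V, le.1 ⬝ᵥ ζ - le.2 ≤ B) : penalty V ζ ≤ B := by
  obtain ⟨le, hle⟩ := hV
  refine csSup_le ⟨_, le, hle, rfl⟩ ?_
  rintro _ ⟨le, hle, rfl⟩
  exact h le hle

end Penalty

section PolyhedralPenalty

variable {ι κ ρ θ : Type*} [Fintype ι] [Fintype κ]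
  {M : Matrix ρ ι ℝ} {N : Matrix ρ κ ℝ} {s t : ρ → ℝ}

variable (M N s t) in
def penaltySet : Set ((ι → ℝ) × ℝ) :=
  {le | 0 ≤ le.2 ∧ ∃ μ : κ → ℝ, M *ᵥ le.1 + N *ᵥ μ + le.2 • s ≤ t}

theorem smul_mem_penaltySet (hV₀ : (0, 0) ∈ penaltySet M N s t) {l : ι → ℝ} {μ : κ → ℝ}
    {η k τ : ℝ} (hη : 0 ≤ η) (h : M *ᵥ l + N *ᵥ μ + η • s ≤ k • t) (hτ : 0 ≤ τ)
    (hτk : τ * k ≤ 1) : τ • (l, η) ∈ penaltySet M N s t := by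
  obtain ⟨-, μ₀, hμ₀⟩ := hV₀
  refine ⟨mul_nonneg hτ hη, τ • μ + (1 - τ * k) • μ₀, ?_⟩
  have h₀ : N *ᵥ μ₀ ≤ t := by simpa using hμ₀
  calc M *ᵥ (τ • l) + N *ᵥ (τ • μ + (1 - τ * k) • μ₀) + (τ * η) • s
      = τ • (M *ᵥ l + N *ᵥ μ + η • s) + (1 - τ * k) • N *ᵥ μ₀ := by
        simp only [mulVec_smul, mulVec_add, smul_add, smul_smul]; abel
    _ ≤ τ • (k • t) + (1 - τ * k) • t := by gcongr
    _ = t := by module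

theorem dotProduct_sub_le_mul_penalty (hV : Bornology.IsBounded (penaltySet M N s t))
    (hV₀ : (0, 0) ∈ penaltySet M N s t) {l : ι → ℝ} {μ : κ → ℝ} {η k : ℝ} (hη : 0 ≤ η)
    (hk : 0 ≤ k) (h : M *ᵥ l + N *ᵥ μ + η • s ≤ k • t) (ζ : ι → ℝ) :
    l ⬝ᵥ ζ - η ≤ k * penalty (penaltySet M N s t) ζ := by
  rcases hk.eq_or_lt with rfl | hk
  · obtain ⟨rfl, rfl⟩ := Prod.mk_eq_zero.1 <| eq_zero_of_isBounded_of_forall_smul_mem hV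
      fun τ hτ => smul_mem_penaltySet hV₀ hη h hτ (by simp)
    simp
  · have := le_penalty hV (smul_mem_penaltySet hV₀ hη h (inv_nonneg.2 hk.le)
      (inv_mul_cancel₀ hk.ne').le) ζ
    simp only [Prod.smul_mk, smul_dotProduct, smul_eq_mul] at this
    rw [← inv_mul_le_iff₀ hk]
    linarith

theorem penalty_le_dotProduct [Fintype ρ] (hV₀ : (0, 0) ∈ penaltySet M N s t) {u : ρ → ℝ}
    (hu : 0 ≤ u) (huN : u ᵥ* N = 0) (hus : -1 ≤ s ⬝ᵥ u) :
    penalty (penaltySet M N s t) (u ᵥ* M) ≤ t ⬝ᵥ u := by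
  refine penalty_le ⟨_, hV₀⟩ ?_
  rintro ⟨l, η⟩ ⟨hη, μ, hμ⟩
  have := dotProduct_le_dotProduct_of_nonneg_left hμ hu
  simp only [dotProduct_add, dotProduct_mulVec, huN, zero_dotProduct, add_zero, dotProduct_smul,
    smul_eq_mul, dotProduct_comm u s, dotProduct_comm u t] at this
  rw [dotProduct_comm l]
  nlinarith

theorem dotProduct_sub_mul_penalty_le_dotProduct_add [Fintype θ] {H : Matrix θ ι ℝ} {h : θ → ℝ}
    (hV : Bornology.IsBounded (penaltySet M N s t)) (hV₀ : (0, 0) ∈ penaltySet M N s t)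
    {a z : ι → ℝ} {β : θ → ℝ} {μ : κ → ℝ} {η k : ℝ} (hz : H *ᵥ z ≤ h) (hβ : 0 ≤ β)
    (hη : 0 ≤ η) (hk : 0 ≤ k) (hμ : M *ᵥ (a - Hᵀ *ᵥ β) + N *ᵥ μ + η • s ≤ k • t) :
    a ⬝ᵥ z - k * penalty (penaltySet M N s t) z ≤ β ⬝ᵥ h + η := by
  have h₁ := dotProduct_sub_le_mul_penalty hV hV₀ hη hk hμ z
  have h₂ : β ⬝ᵥ (H *ᵥ z) ≤ β ⬝ᵥ h := dotProduct_le_dotProduct_of_nonneg_left hz hβ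
  rw [sub_dotProduct, mulVec_transpose, ← dotProduct_mulVec] at h₁
  linarith

theorem exists_dual_le_of_forall_dotProduct_sub_mul_penalty_le [Fintype ρ] [Fintype θ]
    {H : Matrix θ ι ℝ} {h : θ → ℝ} (hh : 0 ≤ h) (hV₀ : (0, 0) ∈ penaltySet M N s t)
    {a : ι → ℝ} {k r : ℝ} (hk : 0 ≤ k)
    (hr : ∀ z, H *ᵥ z ≤ h → a ⬝ᵥ z - k * penalty (penaltySet M N s t) z ≤ r) :
    ∃ (β : θ → ℝ) (η : ℝ) (μ : κ → ℝ), 0 ≤ β ∧ 0 ≤ η ∧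
      M *ᵥ (a - Hᵀ *ᵥ β) + N *ᵥ μ + η • s ≤ k • t ∧ β ⬝ᵥ h + η ≤ r := by
  -- `A u ≤ b` stacks `Nᵀu ≤ 0`, `-Nᵀu ≤ 0`, `HMᵀu ≤ h`, `-sᵀu ≤ 1`; multipliers `y₁, y₂, β, η`
  let A := fromRows (fromRows Nᵀ (-Nᵀ)) (fromRows (H * Mᵀ) (replicateRow Unit (-s)))
  let b : (κ ⊕ κ) ⊕ θ ⊕ Unit → ℝ := Sum.elim 0 (Sum.elim h 1)
  have hprimal : ∀ u, 0 ≤ u → A *ᵥ u ≤ b → (M *ᵥ a - k • t) ⬝ᵥ u ≤ r := by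
    intro u hu hAu
    simp only [A, b, fromRows_mulVec, ← Sum.elim_zero_zero, Sum.elim_le_elim_iff,
      replicateRow_mulVec_eq_const, neg_mulVec] at hAu
    obtain ⟨⟨hN, hN'⟩, hHM, hs⟩ := hAu
    have huN : u ᵥ* N = 0 := by
      rw [← mulVec_transpose]
      exact le_antisymm hN (neg_nonpos.1 hN')
    have hz : H *ᵥ (u ᵥ* M) ≤ h := by rwa [← mulVec_transpose, mulVec_mulVec]
    have hus : -1 ≤ s ⬝ᵥ u := by simpa [neg_le, dotProduct_comm] using hs ()
    have hp := penalty_le_dotProduct hV₀ hu huN hus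
    calc (M *ᵥ a - k • t) ⬝ᵥ u = a ⬝ᵥ (u ᵥ* M) - k * (t ⬝ᵥ u) := by
          rw [sub_dotProduct, smul_dotProduct, dotProduct_comm, dotProduct_mulVec,
            dotProduct_comm, smul_eq_mul]
      _ ≤ a ⬝ᵥ (u ᵥ* M) - k * penalty (penaltySet M N s t) (u ᵥ* M) := by gcongr
      _ ≤ r := hr _ hz
  obtain ⟨y, hy, hyA, hyb⟩ := A.exists_dual_le_of_forall_primal_le b _ r
    ⟨0, le_rfl, by simpa [b, ← Sum.elim_zero_zero] using hh⟩ hprimal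
  obtain ⟨y₁, y₂, β, η, rfl⟩ :
      ∃ y₁ y₂ β η, y = Sum.elim (Sum.elim y₁ y₂) (Sum.elim β fun _ => η) :=
    ⟨_, _, _, y (Sum.inr (Sum.inr ())), by ext ((i | i) | (i | ⟨⟩)) <;> rfl⟩
  simp only [← Sum.elim_zero_zero, Sum.elim_le_elim_iff] at hy
  have hrow : (fun _ : Unit => η) ᵥ* replicateRow Unit (-s) = -(η • s) := by
    ext; simp [vecMul, dotProduct, replicateRow]
  simp only [A, vecMul_fromRows, Sum.elim_comp_inl, Sum.elim_comp_inr, vecMul_transpose,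
    vecMul_neg, ← vecMul_vecMul, hrow] at hyA
  refine ⟨β, η, y₂ - y₁, hy.2.1, hy.2.2 (), fun i => ?_, ?_⟩
  · have := hyA i
    simp [mulVec_sub, ← mulVec_transpose] at this ⊢
    linarith
  · simpa [b, sumElim_dotProduct_sumElim, dotProduct_comm] using hyb

end PolyhedralPenalty

theorem innermax_polyhedral_penalty_general {nz nμ nm nh : ℕ}
    (H : Matrix (Fin nh) (Fin nz) ℝ) (h : Fin nh → ℝ) (hh : 0 ≤ h)
    (M : Matrix (Fin nm) (Fin nz) ℝ) (N : Matrix (Fin nm) (Fin nμ) ℝ)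
    (s t : Fin nm → ℝ)
    (V : Set ((Fin nz → ℝ) × ℝ))
    (hV : V = {le | 0 ≤ le.2 ∧
      ∃ μ : Fin nμ → ℝ, M.mulVec le.1 + N.mulVec μ + le.2 • s ≤ t})
    (hVbdd : Bornology.IsBounded V)
    (hV0 : ((0 : Fin nz → ℝ), (0 : ℝ)) ∈ V)
    (p : (Fin nz → ℝ) → ℝ)
    (hp : ∀ ζ, p ζ = sSup {v : ℝ | ∃ le ∈ V, v = le.1 ⬝ᵥ ζ - le.2})
    (a : Fin nz → ℝ) (k : ℝ) (hk : 0 ≤ k) :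
    sSup {v : ℝ | ∃ z : Fin nz → ℝ, H.mulVec z ≤ h ∧ v = a ⬝ᵥ z - k * p z}
      = sInf {v : ℝ | ∃ (β : Fin nh → ℝ) (η : ℝ), 0 ≤ β ∧ 0 ≤ η ∧
          (∃ μ : Fin nμ → ℝ,
            M.mulVec (a - Hᵀ.mulVec β) + N.mulVec μ + η • s ≤ k • t) ∧
          v = β ⬝ᵥ h + η} := by
  subst hV
  obtain rfl : p = penalty (penaltySet M N s t) := funext hp
  apply Real.sSup_eq_sInf_of_forall_le_of_forall_exists_le
  · rintro _ ⟨z, hz, rfl⟩ _ ⟨β, η, hβ, hη, ⟨μ, hμ⟩, rfl⟩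
    exact dotProduct_sub_mul_penalty_le_dotProduct_add hVbdd hV0 hz hβ hη hk hμ
  · intro r hr
    obtain ⟨β, η, μ, hβ, hη, hμ, hβr⟩ :=
      exists_dual_le_of_forall_dotProduct_sub_mul_penalty_le hh hV0 hk
        fun z hz => hr _ ⟨z, hz, rfl⟩
    exact ⟨_, ⟨β, η, hβ, hη, ⟨μ, hμ⟩, rfl⟩, hβr⟩

/-- **Proposition 7 (inner maximization with a polyhedral penalty).**
For the nonempty polyhedron `Z = {z : Hz ≤ h}` (`h ≥ 0`) and the polyhedral penalty
`p(ζ) = max{λᵀζ − η : (λ,η) ∈ V}` (with `V` bounded, containing the origin and admitting a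
Slater point), for any `a` and `k ≥ 0`:
`max_{z ∈ Z} (aᵀz − k·p(z)) = min{βᵀh + η : β ≥ 0, η ≥ 0, (a − Hᵀβ, η, k) ∈ V̄}`,
where `V̄` is the perspective cone of `V`. -/
theorem innermax_polyhedral_penalty {nz nμ nm nh : ℕ}
    (H : Matrix (Fin nh) (Fin nz) ℝ) (h : Fin nh → ℝ) (hh : 0 ≤ h)
    (hZne : ∃ z : Fin nz → ℝ, H.mulVec z ≤ h)
    (M : Matrix (Fin nm) (Fin nz) ℝ) (N : Matrix (Fin nm) (Fin nμ) ℝ)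
    (s t : Fin nm → ℝ)
    (V : Set ((Fin nz → ℝ) × ℝ))
    (hV : V = {le | 0 ≤ le.2 ∧
      ∃ μ : Fin nμ → ℝ, M.mulVec le.1 + N.mulVec μ + le.2 • s ≤ t})
    (hVbdd : Bornology.IsBounded V)
    (hV0 : ((0 : Fin nz → ℝ), (0 : ℝ)) ∈ V)
    (hslater : ∃ μhat : Fin nμ → ℝ, ∀ i, (N.mulVec μhat) i < t i)
    (p : (Fin nz → ℝ) → ℝ)
    (hp : ∀ ζ, p ζ = sSup {v : ℝ | ∃ le ∈ V, v = le.1 ⬝ᵥ ζ - le.2})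
    (a : Fin nz → ℝ) (k : ℝ) (hk : 0 ≤ k) :
    sSup {v : ℝ | ∃ z : Fin nz → ℝ, H.mulVec z ≤ h ∧ v = a ⬝ᵥ z - k * p z}
      = sInf {v : ℝ | ∃ (β : Fin nh → ℝ) (η : ℝ), 0 ≤ β ∧ 0 ≤ η ∧
          (∃ μ : Fin nμ → ℝ,
            M.mulVec (a - Hᵀ.mulVec β) + N.mulVec μ + η • s ≤ k • t) ∧
          v = β ⬝ᵥ h + η} :=
  innermax_polyhedral_penalty_general H h hh M N s t V hV hVbdd hV0 p hp a k hk
end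

section
/- Let Z = {z ∈ ℝ^{n_z} : Hz ≤ h} be a nonempty polyhedron with h ≥ 0, and let p be a norm of the form p(ζ) = max{λᵀζ : λ ∈ ℝ^{n_z}, ∃μ ∈ ℝ^{n_μ}, Mλ + Nμ ≤ t}, with dual norm p*(ζ) = min{δ ≥ 0 : ∃μ, Mζ + Nμ ≤ δ·t}. Then for every a ∈ ℝ^{n_z} and every k ≥ 0, max_{z ∈ Z} ( aᵀz − k·p(z) ) = min{ βᵀh : β ∈ ℝ^{n_h}, β ≥ 0, p*(a − Hᵀβ) ≤ k }. -/
/-!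
Weak duality is a Hölder inequality `ωᵀz ≤ p*(ω) p(z)`: if `Mω + Nμ ≤ δt`, then
`(λ₀ + sω) / (1 + sδ)` lies in `Λ = {λ | ∃ μ, Mλ + Nμ ≤ t}` for every `s ≥ 0` and every `λ₀ ∈ Λ`,
so `λ₀ᵀz + s ωᵀz ≤ (1 + sδ) p(z)` and hence `ωᵀz ≤ δ p(z)`.

Strong duality comes from Farkas' lemma. If no dual feasible `β` has `βᵀh ≤ v`, a Farkas
certificate `(y, γ) ≥ 0` gives a direction `w = Mᵀy` with `Hw ≤ γh`, `p(w) ≤ tᵀy` and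
`aᵀw - k p(w) > γv`; then `(z₀ + sw) / (1 + sγ)` is primal feasible with value above `v` for
large `s`. The same certificate argument shows that `p*` is finite.
-/

open Matrix Finset

theorem Finset.sum_insert_update_smul {ι R E : Type*} [DecidableEq ι] [Semiring R]
    [AddCommMonoid E] [Module R E] {a : ι} {s : Finset ι} (ha : a ∉ s) (y : ι → R) (c : R)
    (f : ι → E) :
    ∑ i ∈ insert a s, Function.update y a c i • f i = c • f a + ∑ i ∈ s, y i • f i := by
  rw [sum_insert ha, Function.update_self]
  congr 1
  exact sum_congr rfl fun i hi => by rw [Function.update_of_ne (ne_of_mem_of_not_mem hi ha)]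

section Farkas

variable {E ι : Type*} [AddCommGroup E] [Module ℝ E]

theorem Module.Dual.sub_div_smul_apply (g f : Module.Dual ℝ E) (z x : E) (d : ℝ) :
    (g - (g z / d) • f) x = g (x - (f x / d) • z) := by
  simp only [LinearMap.sub_apply, LinearMap.smul_apply, map_sub, map_smul, smul_eq_mul]
  ring

theorem exists_nonneg_sum_smul_eq_or_exists_separating [DecidableEq ι]
    (f : ι → Module.Dual ℝ E) (s : Finset ι) (φ : Module.Dual ℝ E) :
    (∃ y : ι → ℝ, 0 ≤ y ∧ ∑ i ∈ s, y i • f i = φ) ∨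
      ∃ x, (∀ i ∈ s, f i x ≤ 0) ∧ 0 < φ x := by
  induction s using Finset.induction_on generalizing f φ with
  | empty =>
    by_cases hφ : φ = 0
    · exact .inl ⟨0, le_rfl, by simp [hφ]⟩
    · obtain ⟨x, hx⟩ := DFunLike.ne_iff.mp hφ
      rcases (show φ x ≠ 0 from hx).lt_or_gt with hneg | hpos
      · exact .inr ⟨-x, by simp, by simpa using hneg⟩
      · exact .inr ⟨x, by simp, hpos⟩
  | insert a s ha ih =>
    rcases ih f φ with ⟨y, hy, hyφ⟩ | ⟨z, hz, hφz⟩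
    · refine .inl ⟨Function.update y a 0, le_update_iff.2 ⟨le_rfl, fun j _ => hy j⟩, ?_⟩
      rw [sum_insert_update_smul ha, zero_smul, zero_add, hyφ]
    by_cases hd : f a z ≤ 0
    · exact .inr ⟨z, forall_mem_insert _ _ _ |>.mpr ⟨hd, hz⟩, hφz⟩
    rw [not_le] at hd
    -- Project along `z` onto the kernel of `f a` and recurse on `s`.
    set d := f a z
    rcases ih (fun i => f i - (f i z / d) • f a) (φ - (φ z / d) • f a) with
      ⟨y, hy, hyφ⟩ | ⟨x, hx, hφx⟩
    · have hc : 0 ≤ (φ z - ∑ i ∈ s, y i * f i z) / d := by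
        have : ∑ i ∈ s, y i * f i z ≤ 0 :=
          sum_nonpos fun i hi => mul_nonpos_of_nonneg_of_nonpos (hy i) (hz i hi)
        exact div_nonneg (by linarith) hd.le
      refine .inl ⟨Function.update y a _, le_update_iff.2 ⟨hc, fun j _ => hy j⟩, ?_⟩
      have expand : ∑ i ∈ s, y i • (f i - (f i z / d) • f a)
          = ∑ i ∈ s, y i • f i - ((∑ i ∈ s, y i * f i z) / d) • f a := by
        simp only [smul_sub, smul_smul, sum_sub_distrib, sum_div, sum_smul, mul_div_assoc]
      rw [expand] at hyφ
      rw [sum_insert_update_smul ha]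
      linear_combination (norm := module) hyφ
    · refine .inr ⟨x - (f a x / d) • z, fun i hi => ?_,
        by rw [← Module.Dual.sub_div_smul_apply]; exact hφx⟩
      rw [← Module.Dual.sub_div_smul_apply]
      rcases mem_insert.mp hi with rfl | hi
      · simp [field]
      · exact hx i hi

theorem exists_nonneg_sum_smul_eq_zero_of_infeasible [Fintype ι] (g : ι → Module.Dual ℝ E)
    (b : ι → ℝ) (h : ¬ ∃ x, ∀ i, g i x ≤ b i) :
    ∃ y : ι → ℝ, 0 ≤ y ∧ ∑ i, y i • g i = 0 ∧ y ⬝ᵥ b < 0 := by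
  classical
  -- Homogenize: `g x ≤ τ • b` with `τ > 0` is solvable iff `g x ≤ b` is.
  rcases exists_nonneg_sum_smul_eq_or_exists_separating
      (fun i => g i ∘ₗ LinearMap.fst ℝ E ℝ - b i • LinearMap.snd ℝ E ℝ) univ
      (LinearMap.snd ℝ E ℝ) with ⟨y, hy, hyg⟩ | ⟨⟨x, τ⟩, hx, hτ⟩
  · refine ⟨y, hy, ?_, ?_⟩
    · ext x
      simpa using LinearMap.congr_fun hyg (x, 0)
    · have : -(y ⬝ᵥ b) = 1 := by simpa [dotProduct] using LinearMap.congr_fun hyg (0, 1)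
      linarith
  · refine absurd ⟨τ⁻¹ • x, fun i => ?_⟩ h
    have hτ : 0 < τ := by simpa using hτ
    have : g i x ≤ b i * τ := by simpa using hx i (mem_univ i)
    rw [map_smul, smul_eq_mul, inv_mul_le_iff₀ hτ]
    linarith

end Farkas

theorem exists_nonneg_lt_add_mul (c : ℝ) {d : ℝ} (hd : 0 < d) : ∃ s, 0 ≤ s ∧ 0 < c + s * d :=
  ⟨(|c| + 1) / d, by positivity, by rw [div_mul_cancel₀ _ hd.ne']; linarith [neg_abs_le c]⟩

theorem LinearMap.map_smul_add_le_of_le_smul {E F : Type*} [AddCommGroup E] [Module ℝ E]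
    [AddCommGroup F] [PartialOrder F] [IsOrderedAddMonoid F] [Module ℝ F] [PosSMulMono ℝ F]
    (L : E →ₗ[ℝ] F) {b : F} {x₀ x : E} {γ s : ℝ} (hγ : 0 ≤ γ) (hs : 0 ≤ s)
    (h₀ : L x₀ ≤ b) (h : L x ≤ γ • b) : L ((1 + s * γ)⁻¹ • (x₀ + s • x)) ≤ b := by
  have hpos : 0 < 1 + s * γ := by positivity
  calc L ((1 + s * γ)⁻¹ • (x₀ + s • x))
      = (1 + s * γ)⁻¹ • (L x₀ + s • L x) := by rw [map_smul, map_add, map_smul]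
    _ ≤ (1 + s * γ)⁻¹ • ((1 + s * γ) • b) := by
        rw [add_smul, one_smul, mul_smul]
        gcongr
    _ = b := inv_smul_smul₀ hpos.ne' b

section PolyhedralNorm

variable {m n l : Type*} [Fintype n] [Fintype l]
  (M : Matrix m n ℝ) (N : Matrix m l ℝ) (t : m → ℝ)

noncomputable def polyhedralSupport (ζ : n → ℝ) : ℝ :=
  sSup {v : ℝ | ∃ lam : n → ℝ, (∃ μ : l → ℝ, M *ᵥ lam + N *ᵥ μ ≤ t) ∧ v = lam ⬝ᵥ ζ}

/-- The gauge of `{λ | ∃ μ, Mλ + Nμ ≤ t}`: the dual norm of `polyhedralSupport M N t`. -/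
noncomputable def polyhedralGauge (ω : n → ℝ) : ℝ :=
  sInf {δ : ℝ | 0 ≤ δ ∧ ∃ μ : l → ℝ, M *ᵥ ω + N *ᵥ μ ≤ δ • t}

variable {M N t} {p : Seminorm ℝ (n → ℝ)}

theorem dotProduct_le_of_mulVec_add_mulVec_le (hp : ∀ ζ, p ζ = polyhedralSupport M N t ζ)
    (hp0 : ∀ ζ, p ζ = 0 → ζ = 0) {lam : n → ℝ} {μ : l → ℝ} (h : M *ᵥ lam + N *ᵥ μ ≤ t)
    (z : n → ℝ) : lam ⬝ᵥ z ≤ p z := by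
  by_cases hbdd :
      BddAbove {v : ℝ | ∃ lam : n → ℝ, (∃ μ : l → ℝ, M *ᵥ lam + N *ᵥ μ ≤ t) ∧ v = lam ⬝ᵥ z}
  · rw [hp]
    exact le_csSup hbdd ⟨lam, ⟨μ, h⟩, rfl⟩
  · -- the junk value `sSup _ = 0` of an unbounded set forces `z = 0`
    obtain rfl : z = 0 := hp0 z (by rw [hp, polyhedralSupport, Real.sSup_of_not_bddAbove hbdd])
    simp

theorem exists_mulVec_add_mulVec_le_of_ne_zero (hp : ∀ ζ, p ζ = polyhedralSupport M N t ζ)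
    (hp0 : ∀ ζ, p ζ = 0 → ζ = 0) {z : n → ℝ} (hz : z ≠ 0) :
    ∃ lam μ, M *ᵥ lam + N *ᵥ μ ≤ t := by
  by_contra! hΛ
  refine hz (hp0 z ?_)
  rw [hp, polyhedralSupport]
  convert Real.sSup_empty
  exact Set.eq_empty_of_forall_notMem fun _ ⟨lam, ⟨μ, h⟩, _⟩ => hΛ lam μ h

theorem dotProduct_le_mul_of_mulVec_add_mulVec_le_smul
    (hp : ∀ ζ, p ζ = polyhedralSupport M N t ζ) (hp0 : ∀ ζ, p ζ = 0 → ζ = 0)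
    {lam₀ : n → ℝ} {μ₀ : l → ℝ} (h₀ : M *ᵥ lam₀ + N *ᵥ μ₀ ≤ t)
    {ω : n → ℝ} {μ : l → ℝ} {δ : ℝ} (hδ : 0 ≤ δ) (h : M *ᵥ ω + N *ᵥ μ ≤ δ • t) (z : n → ℝ) :
    ω ⬝ᵥ z ≤ δ * p z := by
  by_contra! hlt
  obtain ⟨s, hs, hpos⟩ := exists_nonneg_lt_add_mul (lam₀ ⬝ᵥ z - p z) (sub_pos.mpr hlt)
  have hmem := (M.mulVecLin.coprod N.mulVecLin).map_smul_add_le_of_le_smul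
    (x₀ := (lam₀, μ₀)) (x := (ω, μ)) hδ hs h₀ h
  have := dotProduct_le_of_mulVec_add_mulVec_le hp hp0 hmem z
  simp only [LinearMap.fst_apply, Prod.smul_fst, Prod.fst_add, smul_dotProduct, add_dotProduct,
    smul_eq_mul] at this
  rw [inv_mul_le_iff₀ (by positivity)] at this
  linarith

theorem apply_transpose_mulVec_le [Fintype m] (hp : ∀ ζ, p ζ = polyhedralSupport M N t ζ)
    {lam₀ : n → ℝ} {μ₀ : l → ℝ} (h₀ : M *ᵥ lam₀ + N *ᵥ μ₀ ≤ t) {y : m → ℝ} (hy : 0 ≤ y)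
    (hN : ∀ μ, y ⬝ᵥ N *ᵥ μ = 0) : p (Mᵀ *ᵥ y) ≤ y ⬝ᵥ t := by
  rw [hp]
  refine csSup_le ⟨_, lam₀, ⟨μ₀, h₀⟩, rfl⟩ ?_
  rintro _ ⟨lam, ⟨μ, h⟩, rfl⟩
  calc lam ⬝ᵥ Mᵀ *ᵥ y = y ⬝ᵥ (M *ᵥ lam + N *ᵥ μ) := by
        rw [dotProduct_add, hN, add_zero, dotProduct_mulVec, vecMul_transpose, dotProduct_comm]
    _ ≤ y ⬝ᵥ t := dotProduct_le_dotProduct_of_nonneg_left h hy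

theorem exists_mulVec_add_mulVec_le_smul_or_exists_certificate [Fintype m] (ω : n → ℝ) :
    (∃ δ : ℝ, 0 ≤ δ ∧ ∃ μ, M *ᵥ ω + N *ᵥ μ ≤ δ • t) ∨
      ∃ w, 0 ≤ w ∧ (∀ μ, w ⬝ᵥ N *ᵥ μ = 0) ∧ w ⬝ᵥ t ≤ 0 ∧ 0 < w ⬝ᵥ M *ᵥ ω := by
  refine or_iff_not_imp_left.2 fun hno => ?_
  -- the constraints `N μ - δ t ≤ -M ω` and `-δ ≤ 0` on `(μ, δ)`
  let g : m ⊕ Unit → Module.Dual ℝ ((l → ℝ) × ℝ) :=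
    Sum.elim (fun r => LinearMap.proj r ∘ₗ N.mulVecLin ∘ₗ LinearMap.fst ℝ _ _ -
      t r • LinearMap.snd ℝ _ _) fun _ => -LinearMap.snd ℝ _ _
  obtain ⟨y, hy, hyg, hyb⟩ :=
    exists_nonneg_sum_smul_eq_zero_of_infeasible g (Sum.elim (-(M *ᵥ ω)) 0) <| by
      rintro ⟨⟨μ, δ⟩, hx⟩
      refine hno ⟨δ, by simpa [g] using hx (.inr ()), μ, fun r => ?_⟩
      have : (M *ᵥ ω) r + (N *ᵥ μ) r ≤ t r * δ := by simpa [g] using hx (.inl r)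
      rw [Pi.add_apply, Pi.smul_apply, smul_eq_mul]
      linarith
  refine ⟨fun r => y (.inl r), fun r => hy _, fun μ => ?_, ?_, ?_⟩
  · simpa [g, Fintype.sum_sum_type, dotProduct] using LinearMap.congr_fun hyg (μ, 0)
  · have : -∑ r, y (.inl r) * t r - y (.inr ()) = 0 := by
      simpa [g, Fintype.sum_sum_type, sub_eq_add_neg] using LinearMap.congr_fun hyg (0, 1)
    rw [dotProduct]
    linarith [show 0 ≤ y (.inr ()) from hy _]
  · simpa [dotProduct, Fintype.sum_sum_type] using hyb

theorem exists_mulVec_add_mulVec_le_smul [Fintype m]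
    (hp : ∀ ζ, p ζ = polyhedralSupport M N t ζ) (hp0 : ∀ ζ, p ζ = 0 → ζ = 0)
    {lam₀ : n → ℝ} {μ₀ : l → ℝ} (h₀ : M *ᵥ lam₀ + N *ᵥ μ₀ ≤ t) (ω : n → ℝ) :
    ∃ δ : ℝ, 0 ≤ δ ∧ ∃ μ, M *ᵥ ω + N *ᵥ μ ≤ δ • t := by
  refine (exists_mulVec_add_mulVec_le_smul_or_exists_certificate ω).resolve_right ?_
  rintro ⟨w, hw, hN, ht, hMω⟩
  have hMw : Mᵀ *ᵥ w = 0 := hp0 _ <| le_antisymm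
    ((apply_transpose_mulVec_le hp h₀ hw hN).trans ht) (apply_nonneg _ _)
  rw [dotProduct_mulVec, ← mulVec_transpose, hMw, zero_dotProduct] at hMω
  exact hMω.false

theorem polyhedralGauge_le {ω : n → ℝ} {μ : l → ℝ} {δ : ℝ} (hδ : 0 ≤ δ)
    (h : M *ᵥ ω + N *ᵥ μ ≤ δ • t) : polyhedralGauge M N t ω ≤ δ :=
  csInf_le ⟨0, fun _ hδ => hδ.1⟩ ⟨hδ, μ, h⟩

theorem dotProduct_le_polyhedralGauge_mul [Fintype m]
    (hp : ∀ ζ, p ζ = polyhedralSupport M N t ζ) (hp0 : ∀ ζ, p ζ = 0 → ζ = 0) (ω z : n → ℝ) :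
    ω ⬝ᵥ z ≤ polyhedralGauge M N t ω * p z := by
  rcases eq_or_ne z 0 with rfl | hz
  · simp
  obtain ⟨lam₀, μ₀, h₀⟩ := exists_mulVec_add_mulVec_le_of_ne_zero hp hp0 hz
  have hpz : 0 < p z := (apply_nonneg p z).lt_of_ne' (mt (hp0 z) hz)
  rw [← div_le_iff₀ hpz]
  obtain ⟨δ, hδ, μ, h⟩ := exists_mulVec_add_mulVec_le_smul hp hp0 h₀ ω
  refine le_csInf ⟨δ, hδ, μ, h⟩ fun δ ⟨hδ, μ, h⟩ => ?_
  rw [div_le_iff₀ hpz]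
  exact dotProduct_le_mul_of_mulVec_add_mulVec_le_smul hp hp0 h₀ hδ h z

end PolyhedralNorm

section Duality

variable {m n l c : Type*} [Fintype m] [Fintype n] [Fintype l] [Fintype c]
  {M : Matrix m n ℝ} {N : Matrix m l ℝ} {t : m → ℝ} {p : Seminorm ℝ (n → ℝ)}
  {H : Matrix c n ℝ} {h : c → ℝ} {a : n → ℝ} {k : ℝ}

theorem dotProduct_sub_mul_le_of_polyhedralGauge_le (hp : ∀ ζ, p ζ = polyhedralSupport M N t ζ)
    (hp0 : ∀ ζ, p ζ = 0 → ζ = 0) {z : n → ℝ} {β : c → ℝ} (hz : H *ᵥ z ≤ h) (hβ : 0 ≤ β)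
    (hβk : polyhedralGauge M N t (a - Hᵀ *ᵥ β) ≤ k) : a ⬝ᵥ z - k * p z ≤ β ⬝ᵥ h := by
  have hdual := dotProduct_le_polyhedralGauge_mul hp hp0 (a - Hᵀ *ᵥ β) z
  have hk := mul_le_mul_of_nonneg_right hβk (apply_nonneg p z)
  have hHz : β ⬝ᵥ H *ᵥ z ≤ β ⬝ᵥ h := dotProduct_le_dotProduct_of_nonneg_left hz hβ
  have hT : (Hᵀ *ᵥ β) ⬝ᵥ z = β ⬝ᵥ H *ᵥ z := by rw [mulVec_transpose, dotProduct_mulVec]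
  rw [sub_dotProduct, hT] at hdual
  linarith

omit [Fintype c] in
theorem exists_lt_dotProduct_sub_mul (hk : 0 ≤ k) {z₀ w : n → ℝ} {γ v : ℝ}
    (hz₀ : H *ᵥ z₀ ≤ h) (hγ : 0 ≤ γ) (hw : H *ᵥ w ≤ γ • h) (hwv : γ * v < a ⬝ᵥ w - k * p w) :
    ∃ z, H *ᵥ z ≤ h ∧ v < a ⬝ᵥ z - k * p z := by
  obtain ⟨s, hs, hsv⟩ := exists_nonneg_lt_add_mul (a ⬝ᵥ z₀ - k * p z₀ - v) (sub_pos.mpr hwv)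
  have hpos : 0 < 1 + s * γ := by positivity
  refine ⟨(1 + s * γ)⁻¹ • (z₀ + s • w), H.mulVecLin.map_smul_add_le_of_le_smul hγ hs hz₀ hw, ?_⟩
  have hp_le : p (z₀ + s • w) ≤ p z₀ + s * p w := by
    simpa [map_smul_eq_mul, Real.norm_of_nonneg hs] using map_add_le_add p z₀ (s • w)
  rw [map_smul_eq_mul, Real.norm_of_nonneg (inv_nonneg.mpr hpos.le), dotProduct_smul, smul_eq_mul,
    mul_left_comm, ← mul_sub, lt_inv_mul_iff₀ hpos, dotProduct_add, dotProduct_smul, smul_eq_mul]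
  linarith [mul_le_mul_of_nonneg_left hp_le hk]

theorem exists_dual_mulVec_le_or_exists_certificate (v : ℝ) :
    (∃ β, 0 ≤ β ∧ (∃ μ, M *ᵥ (a - Hᵀ *ᵥ β) + N *ᵥ μ ≤ k • t) ∧ β ⬝ᵥ h ≤ v) ∨
      ∃ w, 0 ≤ w ∧ ∃ γ : ℝ, 0 ≤ γ ∧ (∀ μ, w ⬝ᵥ N *ᵥ μ = 0) ∧ H *ᵥ Mᵀ *ᵥ w ≤ γ • h ∧
        k * (w ⬝ᵥ t) - a ⬝ᵥ Mᵀ *ᵥ w + γ * v < 0 := by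
  refine or_iff_not_imp_left.2 fun hno => ?_
  -- the constraints `-β ≤ 0`, `N μ - M Hᵀ β ≤ k t - M a` and `h ⬝ᵥ β ≤ v` on `(β, μ)`
  let g : c ⊕ m ⊕ Unit → Module.Dual ℝ ((c → ℝ) × (l → ℝ)) :=
    Sum.elim (fun j => -(LinearMap.proj j ∘ₗ LinearMap.fst ℝ _ _))
      (Sum.elim (fun r => LinearMap.proj r ∘ₗ
          (N.mulVecLin ∘ₗ LinearMap.snd ℝ _ _ - (M * Hᵀ).mulVecLin ∘ₗ LinearMap.fst ℝ _ _))
        fun _ => dotProductBilin ℝ ℝ h ∘ₗ LinearMap.fst ℝ _ _)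
  obtain ⟨y, hy, hyg, hyb⟩ := exists_nonneg_sum_smul_eq_zero_of_infeasible g
      (Sum.elim 0 (Sum.elim (k • t - M *ᵥ a) fun _ => v)) <| by
    rintro ⟨⟨β, μ⟩, hx⟩
    refine hno ⟨β, fun j => by simpa [g] using hx (.inl j), ⟨μ, fun r => ?_⟩,
      (dotProduct_comm β h).trans_le (by simpa [g] using hx (.inr (.inr ())))⟩
    have : (N *ᵥ μ) r ≤ k * t r - (M *ᵥ a) r + (M *ᵥ (β ᵥ* H)) r := by
      simpa [g] using hx (.inr (.inl r))
    simp only [mulVec_sub, mulVec_transpose, Pi.add_apply, Pi.sub_apply, Pi.smul_apply,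
      smul_eq_mul]
    linarith
  set u : c → ℝ := fun j => y (.inl j)
  set w : m → ℝ := fun r => y (.inr (.inl r))
  set γ := y (.inr (.inr ()))
  have hHw : H *ᵥ Mᵀ *ᵥ w = γ • h - u := by
    refine (sub_eq_zero.mp (dotProduct_eq_zero_iff.mp fun β => ?_)).symm
    have : -(u ⬝ᵥ β) + (-(w ⬝ᵥ M *ᵥ (β ᵥ* H)) + γ * h ⬝ᵥ β) = 0 := by
      simpa [g, u, w, γ, dotProduct, Fintype.sum_sum_type] using LinearMap.congr_fun hyg (β, 0)
    have e : (H *ᵥ Mᵀ *ᵥ w) ⬝ᵥ β = w ⬝ᵥ M *ᵥ (β ᵥ* H) := by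
      rw [dotProduct_comm, dotProduct_mulVec, dotProduct_mulVec, vecMul_transpose,
        dotProduct_comm]
    rw [sub_dotProduct, sub_dotProduct, smul_dotProduct, e, smul_eq_mul]
    linarith
  have hval : w ⬝ᵥ (k • t - M *ᵥ a) + γ * v < 0 := by
    simpa [w, γ, dotProduct, Fintype.sum_sum_type] using hyb
  rw [dotProduct_sub, dotProduct_smul, smul_eq_mul, dotProduct_mulVec, ← mulVec_transpose,
    dotProduct_comm _ a] at hval
  refine ⟨w, fun r => hy _, γ, hy _, fun μ => ?_, hHw.trans_le (sub_le_self _ fun j => hy _), hval⟩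
  simpa [g, w, Fintype.sum_sum_type, dotProduct] using LinearMap.congr_fun hyg (0, μ)

theorem exists_dual_mulVec_le_of_forall_le (hp : ∀ ζ, p ζ = polyhedralSupport M N t ζ)
    {lam₀ : n → ℝ} {μ₀ : l → ℝ} (h₀ : M *ᵥ lam₀ + N *ᵥ μ₀ ≤ t) (hk : 0 ≤ k)
    {z₀ : n → ℝ} (hz₀ : H *ᵥ z₀ ≤ h) {v : ℝ}
    (hv : ∀ z, H *ᵥ z ≤ h → a ⬝ᵥ z - k * p z ≤ v) :
    ∃ β, 0 ≤ β ∧ (∃ μ, M *ᵥ (a - Hᵀ *ᵥ β) + N *ᵥ μ ≤ k • t) ∧ β ⬝ᵥ h ≤ v := by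
  refine (exists_dual_mulVec_le_or_exists_certificate v).resolve_right ?_
  rintro ⟨w, hw, γ, hγ, hN, hHw, hval⟩
  have hpw := mul_le_mul_of_nonneg_left (apply_transpose_mulVec_le hp h₀ hw hN) hk
  have hwv : γ * v < a ⬝ᵥ Mᵀ *ᵥ w - k * p (Mᵀ *ᵥ w) := by linarith
  obtain ⟨z, hz, hvz⟩ := exists_lt_dotProduct_sub_mul hk hz₀ hγ hHw hwv
  exact (hv z hz).not_gt hvz

theorem exists_polyhedralGauge_le_of_forall_le (hp : ∀ ζ, p ζ = polyhedralSupport M N t ζ)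
    (hp0 : ∀ ζ, p ζ = 0 → ζ = 0) (hk : 0 ≤ k) {z₀ : n → ℝ} (hz₀ : H *ᵥ z₀ ≤ h) {v : ℝ}
    (hv : ∀ z, H *ᵥ z ≤ h → a ⬝ᵥ z - k * p z ≤ v) :
    ∃ β, 0 ≤ β ∧ polyhedralGauge M N t (a - Hᵀ *ᵥ β) ≤ k ∧ β ⬝ᵥ h ≤ v := by
  by_cases hΛ : ∃ (lam : n → ℝ) (μ : l → ℝ), M *ᵥ lam + N *ᵥ μ ≤ t
  · obtain ⟨lam₀, μ₀, h₀⟩ := hΛ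
    obtain ⟨β, hβ, ⟨μ, hμ⟩, hβv⟩ := exists_dual_mulVec_le_of_forall_le hp h₀ hk hz₀ hv
    exact ⟨β, hβ, polyhedralGauge_le hk hμ, hβv⟩
  · -- an empty polyhedron makes `p = 0`, so `n → ℝ` is trivial
    have hzero (ζ : n → ℝ) : ζ = 0 :=
      by_contra fun hζ => hΛ (exists_mulVec_add_mulVec_le_of_ne_zero hp hp0 hζ)
    refine ⟨0, le_rfl, ?_, by simpa [hzero z₀] using hv z₀ hz₀⟩
    rw [hzero (a - _)]
    exact (polyhedralGauge_le le_rfl (μ := 0) (by simp)).trans hk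

end Duality

theorem csSup_eq_csInf_of_forall_le {S T : Set ℝ} (hS : S.Nonempty)
    (hST : ∀ s ∈ S, ∀ t ∈ T, s ≤ t) (hT : BddAbove S → ∃ t ∈ T, t ≤ sSup S) :
    sSup S = sInf T := by
  by_cases hbdd : BddAbove S
  · obtain ⟨t₀, ht₀, ht₀S⟩ := hT hbdd
    refine le_antisymm (le_csInf ⟨t₀, ht₀⟩ fun t ht => csSup_le hS fun s hs => hST s hs t ht) ?_
    exact (csInf_le ⟨_, fun t ht => hST _ hS.some_mem t ht⟩ ht₀).trans ht₀S
  · -- both sides are the junk value `0`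
    have hT : T = ∅ :=
      Set.eq_empty_of_forall_notMem fun t ht => hbdd ⟨t, fun s hs => hST s hs t ht⟩
    rw [Real.sSup_of_not_bddAbove hbdd, hT, Real.sInf_empty]

theorem innermax_norm_penalty_general {nz nμ nm nh : ℕ}
    (H : Matrix (Fin nh) (Fin nz) ℝ) (h : Fin nh → ℝ)
    (hZne : ∃ z : Fin nz → ℝ, H.mulVec z ≤ h)
    (M : Matrix (Fin nm) (Fin nz) ℝ) (N : Matrix (Fin nm) (Fin nμ) ℝ)
    (t : Fin nm → ℝ)
    (p : (Fin nz → ℝ) → ℝ)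
    (hp : ∀ ζ, p ζ = sSup {v : ℝ | ∃ lam : Fin nz → ℝ,
        (∃ μ : Fin nμ → ℝ, M.mulVec lam + N.mulVec μ ≤ t) ∧ v = lam ⬝ᵥ ζ})
    -- `p` is a norm:
    (hp0 : ∀ ζ, p ζ = 0 ↔ ζ = 0)
    (hphom : ∀ (a : ℝ) (ζ), p (a • ζ) = |a| * p ζ)
    (hptri : ∀ ζ ξ, p (ζ + ξ) ≤ p ζ + p ξ)
    (pstar : (Fin nz → ℝ) → ℝ)
    (hpstar : ∀ ζ, pstar ζ =
      sInf {δ : ℝ | 0 ≤ δ ∧ ∃ μ : Fin nμ → ℝ, M.mulVec ζ + N.mulVec μ ≤ δ • t})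
    (a : Fin nz → ℝ) (k : ℝ) (hk : 0 ≤ k) :
    sSup {v : ℝ | ∃ z : Fin nz → ℝ, H.mulVec z ≤ h ∧ v = a ⬝ᵥ z - k * p z}
      = sInf {v : ℝ | ∃ β : Fin nh → ℝ, 0 ≤ β ∧
          pstar (a - Hᵀ.mulVec β) ≤ k ∧ v = β ⬝ᵥ h} := by
  let q : Seminorm ℝ (Fin nz → ℝ) := .of p hptri fun _ _ => by rw [hphom, Real.norm_eq_abs]
  have hq : ∀ ζ, q ζ = polyhedralSupport M N t ζ := hp
  have hq0 : ∀ ζ, q ζ = 0 → ζ = 0 := fun ζ => (hp0 ζ).mp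
  have hpstar' : ∀ ζ, pstar ζ = polyhedralGauge M N t ζ := hpstar
  obtain ⟨z₀, hz₀⟩ := hZne
  refine csSup_eq_csInf_of_forall_le ⟨_, z₀, hz₀, rfl⟩ ?_ fun hbdd => ?_
  · rintro _ ⟨z, hz, rfl⟩ _ ⟨β, hβ, hβk, rfl⟩
    exact dotProduct_sub_mul_le_of_polyhedralGauge_le (p := q) hq hq0 hz hβ (hpstar' _ ▸ hβk)
  · obtain ⟨β, hβ, hβk, hβv⟩ := exists_polyhedralGauge_le_of_forall_le (p := q) hq hq0 hk hz₀
      fun z hz => le_csSup hbdd ⟨z, hz, rfl⟩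
    exact ⟨_, ⟨β, hβ, (hpstar' _).trans_le hβk, rfl⟩, hβv⟩

/-- **Proposition 7, norm case.**
For the nonempty polyhedron `Z = {z : Hz ≤ h}` (`h ≥ 0`) and a norm penalty
`p(ζ) = max{λᵀζ : ∃ μ, Mλ + Nμ ≤ t}` with dual norm
`p*(ζ) = min{δ ≥ 0 : ∃ μ, Mζ + Nμ ≤ δ·t}`, for any `a` and `k ≥ 0`:
`max_{z ∈ Z} (aᵀz − k·p(z)) = min{βᵀh : β ≥ 0, p*(a − Hᵀβ) ≤ k}`. -/
theorem innermax_norm_penalty {nz nμ nm nh : ℕ}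
    (H : Matrix (Fin nh) (Fin nz) ℝ) (h : Fin nh → ℝ) (hh : 0 ≤ h)
    (hZne : ∃ z : Fin nz → ℝ, H.mulVec z ≤ h)
    (M : Matrix (Fin nm) (Fin nz) ℝ) (N : Matrix (Fin nm) (Fin nμ) ℝ)
    (t : Fin nm → ℝ)
    (p : (Fin nz → ℝ) → ℝ)
    (hp : ∀ ζ, p ζ = sSup {v : ℝ | ∃ lam : Fin nz → ℝ,
        (∃ μ : Fin nμ → ℝ, M.mulVec lam + N.mulVec μ ≤ t) ∧ v = lam ⬝ᵥ ζ})
    -- `p` is a norm: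
    (hp0 : ∀ ζ, p ζ = 0 ↔ ζ = 0)
    (hphom : ∀ (a : ℝ) (ζ), p (a • ζ) = |a| * p ζ)
    (hptri : ∀ ζ ξ, p (ζ + ξ) ≤ p ζ + p ξ)
    (pstar : (Fin nz → ℝ) → ℝ)
    (hpstar : ∀ ζ, pstar ζ =
      sInf {δ : ℝ | 0 ≤ δ ∧ ∃ μ : Fin nμ → ℝ, M.mulVec ζ + N.mulVec μ ≤ δ • t})
    (a : Fin nz → ℝ) (k : ℝ) (hk : 0 ≤ k) :
    sSup {v : ℝ | ∃ z : Fin nz → ℝ, H.mulVec z ≤ h ∧ v = a ⬝ᵥ z - k * p z}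
      = sInf {v : ℝ | ∃ β : Fin nh → ℝ, 0 ≤ β ∧
          pstar (a - Hᵀ.mulVec β) ≤ k ∧ v = β ⬝ᵥ h} :=
  innermax_norm_penalty_general H h hZne M N t p hp hp0 hphom hptri pstar hpstar a k hk
end

section
/- Let K ⊆ ℝ^m be a proper cone (closed, convex, pointed, full-dimensional), B ∈ ℝ^{m×n} and d ∈ ℝ^n. If for every v ∈ ℝ^m there exists y ∈ ℝ^n with By − v ∈ K (complete recourse), then the dual uncertainty set P = {ρ ∈ K* : Bᵀρ = d} is bounded, where K* = {ρ ∈ ℝ^m : ρᵀv ≥ 0 for all v ∈ K} is the dual cone of K. -/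
open Matrix

/-- **Boundedness of the dual uncertainty set under complete recourse.**
If `K ⊆ ℝᵐ` is a proper cone and the complete recourse condition holds
(`∀ v, ∃ y, By − v ∈ K`), then the dual uncertainty set
`P = {ρ ∈ K* : Bᵀρ = d}` is bounded. -/
theorem dual_uncertainty_set_bounded {m n : ℕ} (K : Set (Fin m → ℝ))
    (hKclosed : IsClosed K) (hKconv : Convex ℝ K)
    (hKcone : ∀ v ∈ K, ∀ c : ℝ, 0 ≤ c → c • v ∈ K)
    (hKpointed : K ∩ (-K) = {(0 : Fin m → ℝ)})
    (hKsolid : (interior K).Nonempty)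
    (B : Matrix (Fin m) (Fin n) ℝ) (d : Fin n → ℝ)
    (hcomplete : ∀ v : Fin m → ℝ, ∃ y : Fin n → ℝ, B.mulVec y - v ∈ K) :
    Bornology.IsBounded
      {ρ : Fin m → ℝ | (∀ v ∈ K, 0 ≤ ρ ⬝ᵥ v) ∧ Bᵀ.mulVec ρ = d} := by
  obtain ⟨e, he⟩ := hKsolid
  obtain ⟨δ, hδ, hball⟩ := Metric.isOpen_iff.mp isOpen_interior e he
  obtain ⟨y, hy⟩ := hcomplete e
  rw [isBounded_iff_forall_norm_le]
  refine ⟨2 * (d ⬝ᵥ y) / δ, ?_⟩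
  rintro ρ ⟨hρK, hρd⟩
  have h1 : 0 ≤ ρ ⬝ᵥ (B.mulVec y - e) := hρK _ hy
  have h2 : ρ ⬝ᵥ B.mulVec y = d ⬝ᵥ y := by
    rw [Matrix.dotProduct_mulVec, ← Matrix.mulVec_transpose, hρd]
  have hupper : ρ ⬝ᵥ e ≤ d ⬝ᵥ y := by
    rw [dotProduct_sub, h2] at h1; linarith
  set x : Fin m → ℝ := fun i => -(δ/2) * Real.sign (ρ i) with hx
  have hxnorm : ‖x‖ ≤ δ/2 := by
    rw [pi_norm_le_iff_of_nonneg (by positivity)]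
    intro i
    have : |Real.sign (ρ i)| ≤ 1 := by
      rcases lt_trichotomy (ρ i) 0 with h | h | h <;>
        simp [Real.sign_of_neg, Real.sign_of_pos, h]
    rw [Real.norm_eq_abs, hx, abs_mul, abs_neg, abs_of_pos (by positivity : (0:ℝ) < δ/2)]
    nlinarith
  have hmem : e + x ∈ K := by
    refine interior_subset (hball ?_)
    rw [Metric.mem_ball, dist_eq_norm, add_sub_cancel_left]
    linarith
  have h3 : 0 ≤ ρ ⬝ᵥ (e + x) := hρK _ hmem
  have h4 : ρ ⬝ᵥ x = -(δ/2) * ∑ i, |ρ i| := by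
    rw [dotProduct, Finset.mul_sum]
    refine Finset.sum_congr rfl fun i _ => ?_
    show ρ i * (-(δ/2) * Real.sign (ρ i)) = -(δ/2) * |ρ i|
    rcases lt_trichotomy (ρ i) 0 with h | h | h
    · rw [Real.sign_of_neg h, abs_of_neg h]; ring
    · simp [h]
    · rw [Real.sign_of_pos h, abs_of_pos h]; ring
  have h5 : (δ/2) * ∑ i, |ρ i| ≤ d ⬝ᵥ y := by
    rw [dotProduct_add, h4] at h3; linarith
  have hsum_nonneg : 0 ≤ ∑ i, |ρ i| := Finset.sum_nonneg fun i _ => abs_nonneg _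
  have hnormle : ‖ρ‖ ≤ ∑ i, |ρ i| := by
    rw [pi_norm_le_iff_of_nonneg hsum_nonneg]
    intro i
    exact Finset.single_le_sum (f := fun j => |ρ j|) (fun j _ => abs_nonneg _)
      (Finset.mem_univ i)
  rw [le_div_iff₀ hδ]
  nlinarith
end

section
/- Assume complete and bounded recourse, polyhedral support, and polyhedral penalty, and let X ⊆ ℝ^{n_x}. Define Ȳ as the set of all (x, υ, k) ∈ X × ℝ × ℝ₊ for which there exist AFFINE functions β : ℝ^{n_f} → ℝ^{n_h}, μ : ℝ^{n_f} → ℝ^{n_μ} and η : ℝ^{n_f} → ℝ such that for every ρ ∈ P: ρᵀf(x) + β(ρ)ᵀh + η(ρ) ≤ υ; M(F(x)ᵀρ − Hᵀβ(ρ)) + Nμ(ρ) + s·η(ρ) ≤ t·k; β(ρ) ≥ 0; and η(ρ) ≥ 0. Then: (i) Ȳ ⊆ Y, where Y = {(x,υ,k) ∈ X × ℝ × ℝ₊ : g(x,z) − k·p(z) ≤ υ for all z ∈ Z}; (ii) if (x,υ,k) ∈ Ȳ, υ' ≥ υ and k' ≥ k, then (x,υ',k') ∈ Ȳ; and (iii)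 for every x ∈ X and every υ > g(x,0) there exists a finite k̄ ≥ 0 such that (x, υ, k̄) ∈ Ȳ. -/
open Matrix

private lemma coeff_zero_of_forall_mul_le {L C : ℝ} (hh : ∀ a : ℝ, a * L ≤ C) : L = 0 := by
  by_contra hL
  rcases lt_or_gt_of_ne hL with hneg | hpos
  · have h1 := hh ((C + 1) / L)
    rw [div_mul_cancel₀ _ (ne_of_lt hneg)] at h1; linarith
  · have h1 := hh ((C + 1) / L)
    rw [div_mul_cancel₀ _ (ne_of_gt hpos)] at h1; linarith

private lemma le_of_combo_lt {fa fb fc : ℝ}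
    (hcomb : ∀ u : ℝ, 0 < u → u < 1 → (1 - u) * fb + u * fa < fc) : fa ≤ fc := by
  by_contra hlt
  push_neg at hlt
  by_cases hb : fb < fc
  · have hab : (0 : ℝ) < fa - fb := by linarith
    set u : ℝ := ((fc - fb) / (fa - fb) + 1) / 2 with hu
    have h1 : (fc - fb) / (fa - fb) < 1 := (div_lt_one hab).2 (by linarith)
    have h0 : 0 < (fc - fb) / (fa - fb) := div_pos (by linarith) hab
    have hu0 : 0 < u := by rw [hu]; linarith
    have hu1 : u < 1 := by rw [hu]; linarith
    have hkey := hcomb u hu0 hu1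
    have h3 : (fc - fb) / (fa - fb) < u := by rw [hu]; linarith
    have h4 := mul_lt_mul_of_pos_right h3 hab
    rw [div_mul_cancel₀ _ (ne_of_gt hab)] at h4
    nlinarith
  · have := hcomb (1 / 2) (by norm_num) (by norm_num)
    push_neg at hb; linarith

private lemma conic_farkas {ny nf : ℕ}
    (B : Matrix (Fin nf) (Fin ny) ℝ) (d : Fin ny → ℝ) (K : Set (Fin nf → ℝ))
    (hKconv : Convex ℝ K)
    (hKcone : ∀ v ∈ K, ∀ c : ℝ, 0 ≤ c → c • v ∈ K)
    (hKsolid : (interior K).Nonempty)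
    (hcomplete : ∀ v : Fin nf → ℝ, ∃ y : Fin ny → ℝ, B.mulVec y - v ∈ K)
    (w : Fin nf → ℝ) (c : ℝ)
    (hc : ∀ y : Fin ny → ℝ, B.mulVec y - w ∈ K → c < d ⬝ᵥ y) :
    ∃ ρ : Fin nf → ℝ, (∀ u ∈ K, 0 ≤ ρ ⬝ᵥ u) ∧ Bᵀ.mulVec ρ = d ∧ c ≤ ρ ⬝ᵥ w := by
  obtain ⟨e, he⟩ := hKsolid
  have hK0 : (0 : Fin nf → ℝ) ∈ K := by
    simpa using hKcone e (interior_subset he) 0 le_rfl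
  set A : Set ((Fin nf → ℝ) × ℝ) :=
    {a | ∃ y u, u ∈ K ∧ a.1 = B.mulVec y - w - u ∧ d ⬝ᵥ y ≤ a.2} with hA
  have hAconv : Convex ℝ A := by
    rintro ⟨v₁, r₁⟩ ⟨y₁, u₁, hu₁, hv₁, hr₁⟩ ⟨v₂, r₂⟩ ⟨y₂, u₂, hu₂, hv₂, hr₂⟩ a b ha hb hab
    refine ⟨a • y₁ + b • y₂, a • u₁ + b • u₂, hKconv hu₁ hu₂ ha hb hab, ?_, ?_⟩
    · show a • v₁ + b • v₂ = _
      rw [show v₁ = _ from hv₁, show v₂ = _ from hv₂, Matrix.mulVec_add,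
        Matrix.mulVec_smul, Matrix.mulVec_smul]
      funext i
      simp only [Pi.add_apply, Pi.sub_apply, Pi.smul_apply, smul_eq_mul]
      linear_combination (-(w i)) * hab
    · show d ⬝ᵥ _ ≤ a * r₁ + b * r₂
      rw [dotProduct_add, dotProduct_smul, dotProduct_smul, smul_eq_mul, smul_eq_mul]
      have h1 := mul_le_mul_of_nonneg_left (show d ⬝ᵥ y₁ ≤ r₁ from hr₁) ha
      have h2 := mul_le_mul_of_nonneg_left (show d ⬝ᵥ y₂ ≤ r₂ from hr₂) hb
      linarith
  set a0 : (Fin nf → ℝ) × ℝ := (-w - e, 1) with ha0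
  have hU : a0 ∈ interior A := by
    have hopen : IsOpen {a : (Fin nf → ℝ) × ℝ | -w - a.1 ∈ interior K ∧ 0 < a.2} := by
      apply IsOpen.inter
      · exact isOpen_interior.preimage (continuous_const.sub continuous_fst)
      · exact (isOpen_Ioi : IsOpen (Set.Ioi (0:ℝ))).preimage continuous_snd
    have hsub : {a : (Fin nf → ℝ) × ℝ | -w - a.1 ∈ interior K ∧ 0 < a.2} ⊆ A := by
      rintro ⟨v, r⟩ ⟨h1, h2⟩
      refine ⟨0, -w - v, interior_subset h1, ?_, ?_⟩
      · show v = B.mulVec 0 - w - (-w - v)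
        rw [Matrix.mulVec_zero]; abel
      · show d ⬝ᵥ (0 : Fin ny → ℝ) ≤ r
        rw [dotProduct_zero]; exact h2.le
    refine interior_maximal hsub hopen ?_
    constructor
    · show -w - (-w - e) ∈ interior K
      simpa using he
    · norm_num
  have hxnot : ((0 : Fin nf → ℝ), c) ∉ interior A := by
    intro hmem
    obtain ⟨y, u, hu, h1, h2⟩ := interior_subset hmem
    have hfeas : B.mulVec y - w ∈ K := by
      have h1' : (0 : Fin nf → ℝ) = B.mulVec y - w - u := h1
      have : B.mulVec y - w = u := by
        have := h1'.symm
        rwa [sub_eq_zero] at this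
      rwa [this]
    exact absurd (hc y hfeas) (not_lt.2 h2)
  obtain ⟨φ, hφ⟩ := geometric_hahn_banach_open_point hAconv.interior isOpen_interior hxnot
  have hAle : ∀ a ∈ A, φ a ≤ φ ((0 : Fin nf → ℝ), c) := by
    intro a ha
    apply le_of_combo_lt (fb := φ a0)
    intro u hu0 hu1
    have hseg : (1 - u) • a0 + u • a ∈ interior A :=
      hAconv.openSegment_interior_self_subset_interior hU ha
        ⟨1 - u, u, by linarith, hu0, by ring, rfl⟩
    have := hφ _ hseg
    rwa [map_add, _root_.map_smul, _root_.map_smul, smul_eq_mul, smul_eq_mul] at this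
  set q : Fin nf → ℝ := fun i => φ (Pi.single i 1, 0) with hqdef
  set τ : ℝ := φ (0, 1) with hτdef
  have hdec : ∀ (v : Fin nf → ℝ) (r : ℝ), φ (v, r) = q ⬝ᵥ v + τ * r := by
    intro v r
    have hsplit : (v, r) = ((v, (0:ℝ)) + r • ((0 : Fin nf → ℝ), (1:ℝ))) := by
      ext <;> simp
    have hv : (v, (0:ℝ)) = ∑ i, v i • ((Pi.single i 1 : Fin nf → ℝ), (0:ℝ)) := by
      refine Prod.ext ?_ ?_
      · rw [Prod.fst_sum]
        simp only [Prod.smul_fst]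
        funext j
        rw [Finset.sum_apply]
        simp [Pi.single_apply]
      · rw [Prod.snd_sum]; simp
    rw [hsplit, map_add, hv, map_sum, _root_.map_smul]
    simp only [_root_.map_smul, smul_eq_mul]
    rw [dotProduct_comm]
    simp [dotProduct, hqdef, hτdef, mul_comm]
  have hmain : ∀ (y : Fin ny → ℝ) (u : Fin nf → ℝ), u ∈ K → ∀ r : ℝ, d ⬝ᵥ y ≤ r →
      q ⬝ᵥ (B.mulVec y - w - u) + τ * r ≤ τ * c := by
    intro y u hu r hr
    have ha : (B.mulVec y - w - u, r) ∈ A := ⟨y, u, hu, rfl, hr⟩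
    have h2 := hAle _ ha
    rw [hdec, hdec, dotProduct_zero, zero_add] at h2
    exact h2
  have hτle : τ ≤ 0 := by
    by_contra hτ
    push_neg at hτ
    have hn : ∀ n : ℕ, τ * n ≤ τ * c + q ⬝ᵥ w := by
      intro n
      have h2 := hmain 0 0 hK0 n (by simp)
      rw [Matrix.mulVec_zero, zero_sub, sub_zero, dotProduct_neg] at h2
      linarith
    obtain ⟨n, hn'⟩ := exists_nat_gt ((τ * c + q ⬝ᵥ w) / τ)
    have h3 := hn n
    rw [div_lt_iff₀ hτ] at hn'
    nlinarith
  have hq : ∀ u ∈ K, 0 ≤ q ⬝ᵥ u := by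
    intro u hu
    by_contra hneg
    push_neg at hneg
    have hn : ∀ n : ℕ, (n : ℝ) * (-(q ⬝ᵥ u)) ≤ τ * c + q ⬝ᵥ w := by
      intro n
      have h2 := hmain 0 ((n : ℝ) • u) (hKcone u hu n (by positivity)) 0 (by simp)
      rw [Matrix.mulVec_zero, zero_sub, dotProduct_sub, dotProduct_neg, dotProduct_smul,
        smul_eq_mul] at h2
      linarith
    obtain ⟨n, hn'⟩ := exists_nat_gt ((τ * c + q ⬝ᵥ w) / (-(q ⬝ᵥ u)))
    have h3 := hn n
    rw [div_lt_iff₀ (by linarith)] at hn'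
    nlinarith
  have hBq : B.vecMul q + τ • d = 0 := by
    have hy : ∀ y₀ : Fin ny → ℝ, q ⬝ᵥ B.mulVec y₀ + τ * (d ⬝ᵥ y₀) = 0 := by
      intro y₀
      apply coeff_zero_of_forall_mul_le (C := τ * c + q ⬝ᵥ w)
      intro a
      have h2 := hmain (a • y₀) 0 hK0 (d ⬝ᵥ (a • y₀)) le_rfl
      rw [Matrix.mulVec_smul, sub_zero, dotProduct_sub, dotProduct_smul, dotProduct_smul,
        smul_eq_mul, smul_eq_mul] at h2
      nlinarith [h2]
    have hdp : ∀ y₀ : Fin ny → ℝ, (B.vecMul q + τ • d) ⬝ᵥ y₀ = 0 := by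
      intro y₀
      rw [add_dotProduct, smul_dotProduct, smul_eq_mul, ← Matrix.dotProduct_mulVec]
      exact hy y₀
    have h0 := hdp (B.vecMul q + τ • d)
    rwa [dotProduct_self_eq_zero] at h0
  have hw0 : -(q ⬝ᵥ w) ≤ τ * c := by
    have h2 := hmain 0 0 hK0 0 (by simp)
    rw [Matrix.mulVec_zero, zero_sub, sub_zero, dotProduct_neg] at h2
    linarith
  rcases lt_or_eq_of_le hτle with hτneg | hτ0
  · -- τ < 0
    have hpos : (0 : ℝ) < -τ := by linarith
    refine ⟨(-τ)⁻¹ • q, ?_, ?_, ?_⟩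
    · intro u hu
      rw [smul_dotProduct, smul_eq_mul]
      exact mul_nonneg (inv_nonneg.2 hpos.le) (hq u hu)
    · rw [Matrix.mulVec_transpose, Matrix.smul_vecMul]
      have hvq : B.vecMul q = (-τ) • d := by
        have := hBq
        have h3 : B.vecMul q = -(τ • d) := by
          rw [eq_neg_iff_add_eq_zero]; exact this
        rw [h3, ← neg_smul]
      rw [hvq, smul_smul, inv_mul_cancel₀ (ne_of_gt hpos), one_smul]
    · rw [smul_dotProduct, smul_eq_mul]
      have h4 : (-τ) * c ≤ q ⬝ᵥ w := by linarith
      have h5 := mul_le_mul_of_nonneg_left h4 (inv_nonneg.2 hpos.le)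
      rw [← mul_assoc, inv_mul_cancel₀ (ne_of_gt hpos), one_mul] at h5
      exact h5
  · -- τ = 0
    exfalso
    have hvq0 : B.vecMul q = 0 := by
      have := hBq
      rw [hτ0, zero_smul, add_zero] at this
      exact this
    have hq0 : q = 0 := by
      have hle : ∀ v : Fin nf → ℝ, q ⬝ᵥ v ≤ 0 := by
        intro v
        obtain ⟨y, hy⟩ := hcomplete v
        have h1 := hq _ hy
        rw [dotProduct_sub, Matrix.dotProduct_mulVec, hvq0, zero_dotProduct] at h1
        linarith
      have h2 : q ⬝ᵥ q = 0 :=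
        le_antisymm (hle q) (Finset.sum_nonneg fun i _ => mul_self_nonneg _)
      rwa [dotProduct_self_eq_zero] at h2
    have h5 := hφ a0 hU
    rw [ha0, hdec, hdec, hq0, zero_dotProduct, zero_dotProduct, hτ0] at h5
    simp at h5


/-- **Theorem 3 (affine dual recourse adaptation is a tractable safe approximation).**
Under complete and bounded recourse, polyhedral support and polyhedral penalty, the set
`Ȳ` obtained by restricting the dual recourse `(β, μ, η)` to affine functions of `ρ`
satisfies: (i) `Ȳ ⊆ Y`; (ii) `Ȳ` is monotone in `(υ, k)`; and (iii) for every `x ∈ X`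
and every `υ > g(x,0)` there exists a finite `k̄ ≥ 0` with `(x, υ, k̄) ∈ Ȳ`. -/
theorem affine_dual_recourse_safe_approximation {nx ny nz nf nh nm nμ : ℕ}
    (B : Matrix (Fin nf) (Fin ny) ℝ) (d : Fin ny → ℝ) (K : Set (Fin nf → ℝ))
    -- `K` is a proper cone:
    (hKclosed : IsClosed K) (hKconv : Convex ℝ K)
    (hKcone : ∀ v ∈ K, ∀ c : ℝ, 0 ≤ c → c • v ∈ K)
    (hKpointed : K ∩ (-K) = {(0 : Fin nf → ℝ)})
    (hKsolid : (interior K).Nonempty)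
    -- complete and bounded recourse:
    (hcomplete : ∀ v : Fin nf → ℝ, ∃ y : Fin ny → ℝ, B.mulVec y - v ∈ K)
    (hbounded : ¬ ∃ y : Fin ny → ℝ, B.mulVec y ∈ K ∧ d ⬝ᵥ y < 0)
    -- affine data of the conic evaluation function:
    (f : (Fin nx → ℝ) →ᵃ[ℝ] (Fin nf → ℝ))
    (F : (Fin nx → ℝ) →ᵃ[ℝ] Matrix (Fin nf) (Fin nz) ℝ)
    (g : (Fin nx → ℝ) → (Fin nz → ℝ) → ℝ)
    (hg : ∀ x z, g x z = sInf {v : ℝ | ∃ y : Fin ny → ℝ,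
        B.mulVec y - (f x + (F x).mulVec z) ∈ K ∧ v = d ⬝ᵥ y})
    -- polyhedral support:
    (H : Matrix (Fin nh) (Fin nz) ℝ) (h : Fin nh → ℝ) (hh : 0 ≤ h)
    (hZne : ∃ z : Fin nz → ℝ, H.mulVec z ≤ h)
    -- polyhedral penalty:
    (M : Matrix (Fin nm) (Fin nz) ℝ) (N : Matrix (Fin nm) (Fin nμ) ℝ)
    (s t : Fin nm → ℝ)
    (V : Set ((Fin nz → ℝ) × ℝ))
    (hV : V = {le | 0 ≤ le.2 ∧
      ∃ μ : Fin nμ → ℝ, M.mulVec le.1 + N.mulVec μ + le.2 • s ≤ t})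
    (hVbdd : Bornology.IsBounded V)
    (hV0 : ((0 : Fin nz → ℝ), (0 : ℝ)) ∈ V)
    (hslater : ∃ μhat : Fin nμ → ℝ, ∀ i, (N.mulVec μhat) i < t i)
    (p : (Fin nz → ℝ) → ℝ)
    (hp : ∀ ζ, p ζ = sSup {v : ℝ | ∃ le ∈ V, v = le.1 ⬝ᵥ ζ - le.2})
    (X : Set (Fin nx → ℝ))
    -- dual uncertainty set:
    (P : Set (Fin nf → ℝ))
    (hP : P = {ρ | (∀ v ∈ K, 0 ≤ ρ ⬝ᵥ v) ∧ Bᵀ.mulVec ρ = d})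
    -- the affine dual recourse adaptation set `Ȳ`:
    (Ybar : Set ((Fin nx → ℝ) × ℝ × ℝ))
    (hYbar : Ybar = {q : (Fin nx → ℝ) × ℝ × ℝ | q.1 ∈ X ∧ 0 ≤ q.2.2 ∧
        ∃ (β : (Fin nf → ℝ) →ᵃ[ℝ] (Fin nh → ℝ)) (μ : (Fin nf → ℝ) →ᵃ[ℝ] (Fin nμ → ℝ))
          (η : (Fin nf → ℝ) →ᵃ[ℝ] ℝ),
        ∀ ρ ∈ P,
          ρ ⬝ᵥ f q.1 + β ρ ⬝ᵥ h + η ρ ≤ q.2.1 ∧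
          M.mulVec ((F q.1)ᵀ.mulVec ρ - Hᵀ.mulVec (β ρ)) + N.mulVec (μ ρ)
              + η ρ • s ≤ q.2.2 • t ∧
          0 ≤ β ρ ∧ 0 ≤ η ρ}) :
    (Ybar ⊆ {q : (Fin nx → ℝ) × ℝ × ℝ | q.1 ∈ X ∧ 0 ≤ q.2.2 ∧
        ∀ z : Fin nz → ℝ, H.mulVec z ≤ h → g q.1 z - q.2.2 * p z ≤ q.2.1}) ∧
    (∀ (x : Fin nx → ℝ) (υ k υ' k' : ℝ),
      (x, υ, k) ∈ Ybar → υ ≤ υ' → k ≤ k' → (x, υ', k') ∈ Ybar) ∧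
    (∀ x ∈ X, ∀ υ : ℝ, g x 0 < υ → ∃ kbar : ℝ, 0 ≤ kbar ∧ (x, υ, kbar) ∈ Ybar) := by
  -- weak duality
  have hweak : ∀ ρ : Fin nf → ℝ, (∀ v ∈ K, 0 ≤ ρ ⬝ᵥ v) → Bᵀ.mulVec ρ = d →
      ∀ (w : Fin nf → ℝ) (y : Fin ny → ℝ), B.mulVec y - w ∈ K → ρ ⬝ᵥ w ≤ d ⬝ᵥ y := by
    intro ρ hρK hρB w y hy
    have h1 := hρK _ hy
    rw [dotProduct_sub, Matrix.dotProduct_mulVec, ← Matrix.mulVec_transpose, hρB] at h1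
    linarith
  -- P is nonempty
  have hPne : ∃ ρ, ρ ∈ P := by
    obtain ⟨ρ, h1, h2, _⟩ := conic_farkas B d K hKconv hKcone hKsolid hcomplete 0 (-1)
      (by
        intro y hy
        rw [sub_zero] at hy
        have hge : ¬ (d ⬝ᵥ y < 0) := fun hlt => hbounded ⟨y, hy, hlt⟩
        push_neg at hge
        linarith)
    exact ⟨ρ, by rw [hP]; exact ⟨h1, h2⟩⟩
  -- strong-duality style upper bound on the infimum
  have hglb : ∀ (w : Fin nf → ℝ) (c₀ : ℝ),
      (∀ ρ ∈ P, ρ ⬝ᵥ w ≤ c₀) →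
      sInf {v : ℝ | ∃ y : Fin ny → ℝ, B.mulVec y - w ∈ K ∧ v = d ⬝ᵥ y} ≤ c₀ := by
    intro w c₀ hub
    set S := {v : ℝ | ∃ y : Fin ny → ℝ, B.mulVec y - w ∈ K ∧ v = d ⬝ᵥ y} with hS
    obtain ⟨ρh, hρh⟩ := hPne
    have hρh' : (∀ v ∈ K, 0 ≤ ρh ⬝ᵥ v) ∧ Bᵀ.mulVec ρh = d := by rw [hP] at hρh; exact hρh
    have hSne : S.Nonempty := by
      obtain ⟨y, hy⟩ := hcomplete w
      exact ⟨d ⬝ᵥ y, y, hy, rfl⟩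
    have hSbdd : BddBelow S := by
      refine ⟨ρh ⬝ᵥ w, ?_⟩
      rintro v ⟨y, hy, rfl⟩
      exact hweak ρh hρh'.1 hρh'.2 w y hy
    by_contra hgt
    push_neg at hgt
    have hfor : ∀ y : Fin ny → ℝ, B.mulVec y - w ∈ K → (c₀ + sInf S) / 2 < d ⬝ᵥ y := by
      intro y hy
      have h2 : sInf S ≤ d ⬝ᵥ y := csInf_le hSbdd ⟨y, hy, rfl⟩
      linarith
    obtain ⟨ρ, h1, h2, h3⟩ := conic_farkas B d K hKconv hKcone hKsolid hcomplete w
      ((c₀ + sInf S) / 2) hfor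
    have h4 : ρ ⬝ᵥ w ≤ c₀ := hub ρ (by rw [hP]; exact ⟨h1, h2⟩)
    linarith
  -- facts about p
  obtain ⟨CV, hCV⟩ := isBounded_iff_forall_norm_le.1 hVbdd
  have hub : ∀ (z : Fin nz → ℝ), ∀ le ∈ V, le.1 ⬝ᵥ z - le.2 ≤ CV * (∑ i, |z i|) + CV := by
    intro z le hle
    have h1 : ‖le‖ ≤ CV := hCV le hle
    have hfst : ∀ i, |le.1 i| ≤ CV := by
      intro i
      have := norm_le_pi_norm le.1 i
      have := norm_fst_le le
      rw [Real.norm_eq_abs] at *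
      linarith
    have h2 : le.1 ⬝ᵥ z ≤ CV * ∑ i, |z i| := by
      calc le.1 ⬝ᵥ z = ∑ i, le.1 i * z i := rfl
        _ ≤ ∑ i, |le.1 i * z i| := Finset.sum_le_sum fun i _ => le_abs_self _
        _ = ∑ i, |le.1 i| * |z i| := by simp [abs_mul]
        _ ≤ ∑ i, CV * |z i| :=
            Finset.sum_le_sum fun i _ => mul_le_mul_of_nonneg_right (hfst i) (abs_nonneg _)
        _ = CV * ∑ i, |z i| := by rw [Finset.mul_sum]
    have h3 : -le.2 ≤ CV := by
      have := norm_snd_le le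
      rw [Real.norm_eq_abs] at this
      have := neg_abs_le le.2
      linarith
    linarith
  have hpub : ∀ z : Fin nz → ℝ, BddAbove {v : ℝ | ∃ le ∈ V, v = le.1 ⬝ᵥ z - le.2} := by
    intro z
    refine ⟨CV * (∑ i, |z i|) + CV, ?_⟩
    rintro v ⟨le, hle, rfl⟩
    exact hub z le hle
  have hple : ∀ (z : Fin nz → ℝ), ∀ le ∈ V, le.1 ⬝ᵥ z - le.2 ≤ p z := by
    intro z le hle
    rw [hp]
    exact le_csSup (hpub z) ⟨le, hle, rfl⟩
  have hp0 : ∀ z : Fin nz → ℝ, 0 ≤ p z := by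
    intro z
    have := hple z ((0 : Fin nz → ℝ), (0:ℝ)) hV0
    simpa using this
  have hμ0 : ∃ μ₀ : Fin nμ → ℝ, N.mulVec μ₀ ≤ t := by
    rw [hV] at hV0
    obtain ⟨-, μ₀, hμ₀⟩ := hV0
    refine ⟨μ₀, ?_⟩
    simpa [Matrix.mulVec_zero] using hμ₀
  obtain ⟨μ₀, hμ₀⟩ := hμ0
  refine ⟨?_, ?_, ?_⟩
  · -- Part (i)
    rintro ⟨x, υ, k⟩ hmem
    rw [hYbar] at hmem
    obtain ⟨hxX, hk, β, μ, η, hcond⟩ := hmem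
    dsimp only at hxX hk hcond
    refine ⟨hxX, hk, ?_⟩
    intro z hz
    show g x z - k * p z ≤ υ
    have hsuff : g x z ≤ υ + k * p z := by
      rw [hg]
      apply hglb
      intro ρ hρ
      obtain ⟨h1, h2, h3, h4⟩ := hcond ρ hρ
      set lam : Fin nz → ℝ := (F x)ᵀ.mulVec ρ - Hᵀ.mulVec (β ρ) with hlam
      have hdot : ρ ⬝ᵥ (f x + (F x).mulVec z)
          = ρ ⬝ᵥ f x + lam ⬝ᵥ z + (β ρ) ⬝ᵥ (H.mulVec z) := by
        rw [dotProduct_add, hlam, sub_dotProduct, Matrix.mulVec_transpose,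
          Matrix.mulVec_transpose, ← Matrix.dotProduct_mulVec, ← Matrix.dotProduct_mulVec]
        ring
      have hβH : (β ρ) ⬝ᵥ (H.mulVec z) ≤ (β ρ) ⬝ᵥ h :=
        Finset.sum_le_sum fun i _ => mul_le_mul_of_nonneg_left (hz i) (h3 i)
      have hlamz : lam ⬝ᵥ z - η ρ ≤ k * p z := by
        rcases eq_or_lt_of_le hk with hk0 | hkpos
        · have key : ∀ n : ℕ, (n:ℝ) * (lam ⬝ᵥ z - η ρ) ≤ p z := by
            intro n
            have hmem' : (((n:ℝ) • lam, (n:ℝ) * η ρ) : (Fin nz → ℝ) × ℝ) ∈ V := by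
              rw [hV]
              refine ⟨mul_nonneg (Nat.cast_nonneg n) h4, (n:ℝ) • (μ ρ) + μ₀, ?_⟩
              intro i
              have h2i := h2 i
              have hμ₀i := hμ₀ i
              simp only [Pi.add_apply, Pi.smul_apply, smul_eq_mul, Matrix.mulVec_smul,
                Matrix.mulVec_add] at h2i ⊢
              rw [← hk0] at h2i
              simp only [zero_mul] at h2i
              nlinarith [Nat.cast_nonneg (α := ℝ) n]
            have h5 := hple z _ hmem'
            dsimp only at h5
            rw [smul_dotProduct, smul_eq_mul] at h5
            linarith
          have h6 : lam ⬝ᵥ z - η ρ ≤ 0 := by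
            by_contra hpos'
            push_neg at hpos'
            obtain ⟨n, hn⟩ := exists_nat_gt (p z / (lam ⬝ᵥ z - η ρ))
            have := key n
            rw [div_lt_iff₀ hpos'] at hn
            nlinarith
          rw [← hk0, zero_mul]
          exact h6
        · have hmem' : ((k⁻¹ • lam, k⁻¹ * η ρ) : (Fin nz → ℝ) × ℝ) ∈ V := by
            rw [hV]
            refine ⟨mul_nonneg (inv_nonneg.2 hkpos.le) h4, k⁻¹ • (μ ρ), ?_⟩
            intro i
            have h2i := h2 i
            simp only [Pi.add_apply, Pi.smul_apply, smul_eq_mul, Matrix.mulVec_smul] at h2i ⊢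
            have h7 : k⁻¹ * ((M.mulVec lam) i + (N.mulVec (μ ρ)) i + η ρ * s i)
                ≤ k⁻¹ * (k * t i) := by
              apply mul_le_mul_of_nonneg_left _ (inv_nonneg.2 hkpos.le)
              exact h2i
            rw [← mul_assoc, inv_mul_cancel₀ (ne_of_gt hkpos), one_mul] at h7
            linarith
          have h5 := hple z _ hmem'
          dsimp only at h5
          rw [smul_dotProduct, smul_eq_mul] at h5
          have h6 : k * (k⁻¹ * (lam ⬝ᵥ z) - k⁻¹ * η ρ) ≤ k * p z :=
            mul_le_mul_of_nonneg_left (by linarith) hkpos.le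
          rw [mul_sub, ← mul_assoc, ← mul_assoc, mul_inv_cancel₀ (ne_of_gt hkpos),
            one_mul, one_mul] at h6
          linarith
      linarith
    linarith
  · -- Part (ii)
    intro x υ k υ' k' hmem hυ hk'
    rw [hYbar] at hmem ⊢
    obtain ⟨hxX, hk, β, μ, η, hcond⟩ := hmem
    dsimp only at hxX hk hcond ⊢
    refine ⟨hxX, le_trans hk hk', β,
      { toFun := fun ρ => μ ρ + (k' - k) • μ₀
        linear := μ.linear
        map_vadd' := by
          intro pt v
          have h9 : μ (v +ᵥ pt) = μ.linear v +ᵥ μ pt := μ.map_vadd pt v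
          simp only [vadd_eq_add] at h9 ⊢
          show μ (v + pt) + (k' - k) • μ₀ = μ.linear v + (μ pt + (k' - k) • μ₀)
          rw [h9]
          abel }, η, ?_⟩
    intro ρ hρ
    obtain ⟨h1, h2, h3, h4⟩ := hcond ρ hρ
    refine ⟨by linarith, ?_, h3, h4⟩
    intro i
    have h2i := h2 i
    have hμ₀i := hμ₀ i
    show (M.mulVec _ + N.mulVec (μ ρ + (k' - k) • μ₀) + η ρ • s) i ≤ (k' • t) i
    simp only [Pi.add_apply, Pi.smul_apply, smul_eq_mul, Matrix.mulVec_add,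
      Matrix.mulVec_smul] at h2i ⊢
    have h5 : (k' - k) * (N.mulVec μ₀) i ≤ (k' - k) * t i :=
      mul_le_mul_of_nonneg_left hμ₀i (by linarith)
    linarith
  · -- Part (iii)
    intro x hxX υ hυ
    obtain ⟨e, he⟩ := hKsolid
    obtain ⟨r, hr, hball⟩ := Metric.mem_nhds_iff.1 (mem_interior_iff_mem_nhds.1 he)
    obtain ⟨ye, hye⟩ := hcomplete e
    set R : ℝ := 2 * (d ⬝ᵥ ye) / r with hR
    have hρbound : ∀ ρ : Fin nf → ℝ, (∀ v ∈ K, 0 ≤ ρ ⬝ᵥ v) → Bᵀ.mulVec ρ = d → ‖ρ‖ ≤ R := by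
      intro ρ hρ1 hρ2
      by_cases hρ0 : ρ = 0
      · have h1 : (0:ℝ) ≤ ρ ⬝ᵥ e := hρ1 e (hball (Metric.mem_ball_self hr))
        have h2 : ρ ⬝ᵥ e ≤ d ⬝ᵥ ye := hweak ρ hρ1 hρ2 e ye hye
        rw [hρ0, norm_zero, hR]
        apply div_nonneg (by linarith) hr.le
      · have hnρ : 0 < ‖ρ‖ := norm_pos_iff.2 hρ0
        have hcpos : 0 < (r/2) * ‖ρ‖⁻¹ := by positivity
        have hmem : e - ((r/2) * ‖ρ‖⁻¹) • ρ ∈ K := by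
          apply hball
          rw [Metric.mem_ball]
          have hd : dist (e - ((r/2) * ‖ρ‖⁻¹) • ρ) e = ‖((r/2) * ‖ρ‖⁻¹) • ρ‖ := by
            rw [dist_eq_norm,
              show e - ((r/2) * ‖ρ‖⁻¹) • ρ - e = -(((r/2) * ‖ρ‖⁻¹) • ρ) from by abel,
              norm_neg]
          rw [hd, norm_smul, Real.norm_eq_abs, abs_of_pos hcpos, mul_assoc,
            inv_mul_cancel₀ (ne_of_gt hnρ), mul_one]
          linarith
        have h5 : 0 ≤ ρ ⬝ᵥ (e - ((r/2) * ‖ρ‖⁻¹) • ρ) := hρ1 _ hmem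
        rw [dotProduct_sub, dotProduct_smul, smul_eq_mul] at h5
        have hρρ : ‖ρ‖^2 ≤ ρ ⬝ᵥ ρ := by
          have hρρ0 : 0 ≤ ρ ⬝ᵥ ρ := Finset.sum_nonneg fun i _ => mul_self_nonneg _
          have hsq : ‖ρ‖ ≤ Real.sqrt (ρ ⬝ᵥ ρ) := by
            refine (pi_norm_le_iff_of_nonneg (Real.sqrt_nonneg _)).2 fun i => ?_
            rw [Real.norm_eq_abs, ← Real.sqrt_sq_eq_abs]
            apply Real.sqrt_le_sqrt
            have h7 := Finset.single_le_sum (f := fun j => ρ j * ρ j)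
              (fun j _ => mul_self_nonneg _) (Finset.mem_univ i)
            calc ρ i ^ 2 = ρ i * ρ i := sq (ρ i)
              _ ≤ ρ ⬝ᵥ ρ := h7
          calc ‖ρ‖^2 ≤ Real.sqrt (ρ ⬝ᵥ ρ)^2 := by
                apply pow_le_pow_left₀ (norm_nonneg _) hsq
            _ = ρ ⬝ᵥ ρ := Real.sq_sqrt hρρ0
        have h6 : ρ ⬝ᵥ e ≤ d ⬝ᵥ ye := hweak ρ hρ1 hρ2 e ye hye
        have h7 : (r/2) * ‖ρ‖ ≤ ρ ⬝ᵥ e := by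
          have h8 : ‖ρ‖ = ‖ρ‖⁻¹ * ‖ρ‖^2 := by
            rw [sq, ← mul_assoc, inv_mul_cancel₀ (ne_of_gt hnρ), one_mul]
          have h9 : ‖ρ‖⁻¹ * ‖ρ‖^2 ≤ ‖ρ‖⁻¹ * (ρ ⬝ᵥ ρ) :=
            mul_le_mul_of_nonneg_left hρρ (inv_nonneg.2 (norm_nonneg _))
          calc (r/2) * ‖ρ‖ = (r/2) * (‖ρ‖⁻¹ * ‖ρ‖^2) := by rw [← h8]
            _ ≤ (r/2) * (‖ρ‖⁻¹ * (ρ ⬝ᵥ ρ)) := by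
                apply mul_le_mul_of_nonneg_left h9 (by linarith)
            _ = (r/2) * ‖ρ‖⁻¹ * (ρ ⬝ᵥ ρ) := by ring
            _ ≤ ρ ⬝ᵥ e := by linarith
        rw [hR, le_div_iff₀ hr]
        linarith
    obtain ⟨μhat, hμhat⟩ := hslater
    set G : Matrix (Fin nm) (Fin nf) ℝ := M * (F x)ᵀ with hG
    set C : Fin nm → ℝ := fun i => (∑ j, |G i j|) * R with hC
    set kbar : ℝ :=
      ↑(Finset.univ.sup fun i => Real.toNNReal (C i / (t i - (N.mulVec μhat) i))) with hkbar
    have hkbar0 : (0:ℝ) ≤ kbar := NNReal.coe_nonneg _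
    have hδ : ∀ i, 0 < t i - (N.mulVec μhat) i := fun i => by linarith [hμhat i]
    have hkey : ∀ i, C i ≤ kbar * (t i - (N.mulVec μhat) i) := by
      intro i
      have h1 : C i / (t i - (N.mulVec μhat) i) ≤ kbar := by
        refine le_trans (Real.le_coe_toNNReal _) ?_
        rw [hkbar]
        exact NNReal.coe_le_coe.2 (Finset.le_sup
          (f := fun i => Real.toNNReal (C i / (t i - (N.mulVec μhat) i)))
          (Finset.mem_univ i))
      have h2 := mul_le_mul_of_nonneg_right h1 (hδ i).le
      rw [div_mul_cancel₀ _ (ne_of_gt (hδ i))] at h2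
      exact h2
    refine ⟨kbar, hkbar0, ?_⟩
    rw [hYbar]
    refine ⟨hxX, hkbar0, AffineMap.const ℝ _ 0, AffineMap.const ℝ _ (kbar • μhat),
      AffineMap.const ℝ _ 0, ?_⟩
    intro ρ hρ
    have hρ' : (∀ v ∈ K, 0 ≤ ρ ⬝ᵥ v) ∧ Bᵀ.mulVec ρ = d := by rw [hP] at hρ; exact hρ
    simp only [AffineMap.coe_const, Function.const_apply]
    refine ⟨?_, ?_, le_refl _, le_refl _⟩
    · have hwd : ρ ⬝ᵥ f x ≤ g x 0 := by
        rw [hg]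
        obtain ⟨y0, hy0⟩ := hcomplete (f x + (F x).mulVec 0)
        refine le_csInf ⟨d ⬝ᵥ y0, ⟨y0, hy0, rfl⟩⟩ ?_
        rintro v ⟨y, hy, rfl⟩
        have h10 := hweak ρ hρ'.1 hρ'.2 _ y hy
        rw [Matrix.mulVec_zero, add_zero] at h10
        exact h10
      rw [zero_dotProduct]
      linarith
    · show M.mulVec ((F x)ᵀ.mulVec ρ - Hᵀ.mulVec 0) + N.mulVec (kbar • μhat)
        + (0:ℝ) • s ≤ kbar • t
      rw [Matrix.mulVec_zero, sub_zero, Matrix.mulVec_smul, zero_smul, add_zero]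
      intro i
      have hGρ : (M.mulVec ((F x)ᵀ.mulVec ρ)) i = (G.mulVec ρ) i := by
        rw [hG, ← Matrix.mulVec_mulVec]
      have hnorm := hρbound ρ hρ'.1 hρ'.2
      have hGi : (G.mulVec ρ) i ≤ C i := by
        calc (G.mulVec ρ) i = ∑ j, G i j * ρ j := rfl
          _ ≤ ∑ j, |G i j| * R := by
              refine Finset.sum_le_sum fun j _ => ?_
              have h1 : |ρ j| ≤ R := by
                have h11 := norm_le_pi_norm ρ j
                rw [Real.norm_eq_abs] at h11
                linarith
              calc G i j * ρ j ≤ |G i j * ρ j| := le_abs_self _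
                _ = |G i j| * |ρ j| := abs_mul _ _
                _ ≤ |G i j| * R := mul_le_mul_of_nonneg_left h1 (abs_nonneg _)
          _ = C i := by rw [hC]; dsimp only; rw [Finset.sum_mul]
      have hki := hkey i
      simp only [Pi.add_apply, Pi.smul_apply, smul_eq_mul]
      rw [hGρ]
      linarith
end
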